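/- arXiv:2408.04616 — 5 statements merged into one kernel-verified Lean document; each statement's English description precedes it below -/
import Mathlib

section
/- Let λ and μ be partitions of the same positive integer d. Then p_λ(x) ≥ p_μ(x) holds for every positive integer n and every x ∈ ℝ^n with all coordinates nonnegative if and only if λ superdominates μ. -/
open scoped BigOperators

/-- The parts of a partition listed in increasing order. -/
def partsAsc {d : ℕ} (lam : Nat.Partition d) : List ℕ :=
  lam.parts.sort (· ≤ ·)

/-- The number of parts of a partition. -/
def len {d : ℕ} (lam : Nat.Partition d) : ℕ :=
  Multiset.card lam.parts

/-- `lam` superdominates `mu`: for each `j = 1, …, min(ℓ(lam), ℓ(mu))`, the sum of the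
`j` smallest parts of `lam` is at most the sum of the `j` smallest parts of `mu`. -/
def SuperDominates {d : ℕ} (lam mu : Nat.Partition d) : Prop :=
  ∀ j : ℕ, 1 ≤ j → j ≤ min (len lam) (len mu) →
    ((partsAsc lam).take j).sum ≤ ((partsAsc mu).take j).sum

/-- Power sum `p_r(x) = Σ_i x_i^r`. -/
def psum {n : ℕ} (r : ℕ) (x : Fin n → ℝ) : ℝ :=
  ∑ i, x i ^ r

/-- `p_λ(x) = Π_i p_{λ_i}(x)`. -/
def ppart {n d : ℕ} (lam : Nat.Partition d) (x : Fin n → ℝ) : ℝ :=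
  (lam.parts.map fun r => psum r x).prod




section Analytic

variable {n : ℕ} {x : Fin n → ℝ}

lemma psum_nonneg (hx : ∀ i, 0 ≤ x i) (r : ℕ) : 0 ≤ psum r x :=
  Finset.sum_nonneg fun i _ => pow_nonneg (hx i) r

lemma psum_merge (hx : ∀ i, 0 ≤ x i) (r s : ℕ) :
    psum (r + s) x ≤ psum r x * psum s x := by
  unfold psum
  rw [Finset.sum_mul_sum]
  calc ∑ i, x i ^ (r + s) = ∑ i, x i ^ r * x i ^ s := by
        simp [pow_add]
    _ ≤ ∑ i, ∑ j, x i ^ r * x j ^ s := by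
        apply Finset.sum_le_sum
        intro i _
        exact Finset.single_le_sum (f := fun j => x i ^ r * x j ^ s)
            (fun j _ => mul_nonneg (pow_nonneg (hx i) r) (pow_nonneg (hx j) s))
            (Finset.mem_univ i)

lemma psum_spread (hx : ∀ i, 0 ≤ x i) (r s : ℕ) (hrs : r + 1 ≤ s) :
    psum (r + 1) x * psum s x ≤ psum r x * psum (s + 1) x := by
  unfold psum
  rw [Finset.sum_mul_sum, Finset.sum_mul_sum]
  set F : Fin n → Fin n → ℝ := fun i j => x i ^ r * x j ^ (s+1) - x i ^ (r+1) * x j ^ s with hF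
  have key : ∀ i j, 0 ≤ F i j + F j i := by
    intro i j
    have h1 : F i j + F j i
        = (x i ^ r * x j ^ r) * ((x j - x i) * (x j ^ (s - r) - x i ^ (s - r))) := by
      have es : s = r + (s - r) := by omega
      have es1 : s + 1 = r + (s - r) + 1 := by omega
      have e1 : ∀ y : ℝ, y ^ (s+1) = y ^ r * y ^ (s - r) * y := by
        intro y; rw [es1, pow_add, pow_add, pow_one]
      have e3 : ∀ y : ℝ, y ^ s = y ^ r * y ^ (s - r) := by
        intro y; conv_lhs => rw [es]
        rw [pow_add]
      have e5 : ∀ y : ℝ, y ^ (r+1) = y ^ r * y := by intro y; rw [pow_succ]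
      rw [hF]; dsimp only; rw [e1, e1, e3, e3, e5, e5]; ring
    rw [h1]
    apply mul_nonneg (mul_nonneg (pow_nonneg (hx i) r) (pow_nonneg (hx j) r))
    rcases le_total (x i) (x j) with h | h
    · exact mul_nonneg (by linarith) (by have := pow_le_pow_left₀ (hx i) h (s-r); linarith)
    · have h2 : x j - x i ≤ 0 := by linarith
      have h3 : x j ^ (s-r) - x i ^ (s-r) ≤ 0 := by
        have := pow_le_pow_left₀ (hx j) h (s-r); linarith
      nlinarith [h2, h3]
  have hsum : 0 ≤ ∑ i, ∑ j, (F i j + F j i) := by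
    apply Finset.sum_nonneg; intro i _; apply Finset.sum_nonneg; intro j _; exact key i j
  have hsplit : ∑ i, ∑ j, (F i j + F j i) = (∑ i, ∑ j, F i j) + (∑ i, ∑ j, F j i) := by
    simp [Finset.sum_add_distrib]
  have hcomm : ∑ i, ∑ j, F j i = ∑ i, ∑ j, F i j := Finset.sum_comm
  have hFnn : 0 ≤ ∑ i, ∑ j, F i j := by rw [hsplit, hcomm] at hsum; linarith
  have hsub : ∑ i, ∑ j, F i j
      = (∑ i, ∑ j, x i ^ r * x j ^ (s+1)) - (∑ i, ∑ j, x i ^ (r+1) * x j ^ s) := by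
    rw [← Finset.sum_sub_distrib]
    exact Finset.sum_congr rfl fun i _ => by rw [← Finset.sum_sub_distrib]
  rw [hsub] at hFnn
  linarith

lemma listProd_psum_nonneg (hx : ∀ i, 0 ≤ x i) (l : List ℕ) :
    0 ≤ (l.map fun r => psum r x).prod := by
  induction l with
  | nil => simp
  | cons r t ih => simpa using mul_nonneg (psum_nonneg hx r) ih

lemma psum_sum_le_prod (hx : ∀ i, 0 ≤ x i) (l : List ℕ) (hl : l ≠ []) :
    psum l.sum x ≤ (l.map fun r => psum r x).prod := by
  induction l with
  | nil => simp at hl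
  | cons r t ih =>
    rcases eq_or_ne t [] with rfl | ht
    · simp
    · calc psum (r :: t).sum x = psum (r + t.sum) x := by simp
        _ ≤ psum r x * psum t.sum x := psum_merge hx _ _
        _ ≤ psum r x * (t.map fun q => psum q x).prod := by
            apply mul_le_mul_of_nonneg_left (ih ht) (psum_nonneg hx r)
        _ = ((r :: t).map fun q => psum q x).prod := by simp

end Analytic







/-- the sum of a prefix grows with prefix length -/
lemma take_sum_mono (l : List ℕ) {p q : ℕ} (h : p ≤ q) :
    (l.take p).sum ≤ (l.take q).sum := by
  have : q = p + (q - p) := by omega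
  rw [this, List.take_add, List.sum_append]
  omega

lemma suff_list (M : ℕ) : ∀ (a b : List ℕ), b.Pairwise (· ≤ ·) →
    (∀ r ∈ a, 0 < r) → (∀ r ∈ b, 0 < r) → a.sum = b.sum → 0 < b.sum →
    (∀ j, 1 ≤ j → j ≤ min a.length b.length → (a.take j).sum ≤ (b.take j).sum) →
    b.length + (∑ i ∈ Finset.range b.length,
      ((b.take (i+1)).sum - (a.take (i+1)).sum)) ≤ M →
    ∀ (n : ℕ) (x : Fin n → ℝ), (∀ i, 0 ≤ x i) →
      (b.map fun r => psum r x).prod ≤ (a.map fun r => psum r x).prod := by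
  induction M with
  | zero =>
    intro a b _ _ hbpos hsum hbs0 _ hM
    exfalso
    have hb : b ≠ [] := by
      intro h; rw [h] at hbs0; simp at hbs0
    have : 0 < b.length := List.length_pos_iff.mpr hb
    omega
  | succ M ih =>
    intro a b hbsort hapos hbpos hsum hbs0 hsd hM n x hx
    have hb : b ≠ [] := by intro h; rw [h] at hbs0; simp at hbs0
    have ha : a ≠ [] := by
      intro h; rw [h] at hsum; simp at hsum; omega
    have hal : 0 < a.length := List.length_pos_iff.mpr ha
    have hbl : 0 < b.length := List.length_pos_iff.mpr hb
    -- b.length ≤ a.length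
    have hba : b.length ≤ a.length := by
      by_contra hlt
      push_neg at hlt
      have h1 : (a.take a.length).sum ≤ (b.take a.length).sum :=
        hsd a.length hal (by omega)
      rw [List.take_length] at h1
      have h2 : b.sum = (b.take a.length).sum + (b.drop a.length).sum := by
        conv_lhs => rw [← List.take_append_drop a.length b]
        rw [List.sum_append]
      have h3 : 0 < (b.drop a.length).sum := by
        apply List.sum_pos
        · intro r hr; exact hbpos r (List.drop_subset _ _ hr)
        · intro hnil
          have := congrArg List.length hnil
          simp [List.length_drop] at this
          omega
      omega
    rcases Nat.lt_or_ge b.length 2 with hm1 | hm2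
    -- base case : b = [q]
    · have : b.length = 1 := by omega
      obtain ⟨q, rfl⟩ := List.length_eq_one_iff.mp this
      have hq : q = a.sum := by simpa using hsum.symm
      calc ([q].map fun r => psum r x).prod = psum q x := by simp
        _ = psum a.sum x := by rw [hq]
        _ ≤ (a.map fun r => psum r x).prod := psum_sum_le_prod hx a ha
    · by_cases htie : ∃ j, 1 ≤ j ∧ j ≤ b.length - 1 ∧ (a.take j).sum = (b.take j).sum
      -- SPLIT CASE
      · obtain ⟨j, hj1, hjm, hjeq⟩ := htie
        have hjb : j < b.length := by omega
        have hjl : j ≤ a.length := by omega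
        -- pieces
        set a1 := a.take j with ha1
        set a2 := a.drop j with ha2
        set b1 := b.take j with hb1
        set b2 := b.drop j with hb2
        have hla1 : a1.length = j := by rw [ha1, List.length_take]; omega
        have hlb1 : b1.length = j := by rw [hb1, List.length_take]; omega
        have hla2 : a2.length = a.length - j := by rw [ha2, List.length_drop]
        have hlb2 : b2.length = b.length - j := by rw [hb2, List.length_drop]
        have hsa : a1.sum + a2.sum = a.sum := by
          rw [ha1, ha2]
          conv_rhs => rw [← List.take_append_drop j a]
          rw [List.sum_append]
        have hsb : b1.sum + b2.sum = b.sum := by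
          rw [hb1, hb2]
          conv_rhs => rw [← List.take_append_drop j b]
          rw [List.sum_append]
        have hs2 : a2.sum = b2.sum := by omega
        have hb2pos : 0 < b2.sum := by
          apply List.sum_pos
          · intro r hr; exact hbpos r (List.drop_subset _ _ hr)
          · intro hnil; have := congrArg List.length hnil; rw [hlb2] at this; simp at this; omega
        have hb1pos : 0 < b1.sum := by
          apply List.sum_pos
          · intro r hr; exact hbpos r (List.take_subset _ _ hr)
          · intro hnil; have := congrArg List.length hnil; rw [hlb1] at this; simp at this; omega
        -- superdominance for the two halves
        have hsd1 : ∀ k, 1 ≤ k → k ≤ min a1.length b1.length →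
            (a1.take k).sum ≤ (b1.take k).sum := by
          intro k hk1 hk2
          rw [hla1, hlb1] at hk2
          have hkj : k ≤ j := by omega
          rw [ha1, hb1, List.take_take, List.take_take, min_eq_left hkj]
          exact hsd k hk1 (by omega)
        have hsd2 : ∀ k, 1 ≤ k → k ≤ min a2.length b2.length →
            (a2.take k).sum ≤ (b2.take k).sum := by
          intro k hk1 hk2
          rw [hla2, hlb2] at hk2
          have hjk : j + k ≤ b.length := by omega
          have e1 : (a.take (j+k)).sum = a1.sum + (a2.take k).sum := by
            rw [List.take_add, List.sum_append, ha1, ha2]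
          have e2 : (b.take (j+k)).sum = b1.sum + (b2.take k).sum := by
            rw [List.take_add, List.sum_append, hb1, hb2]
          have e3 : (a.take (j+k)).sum ≤ (b.take (j+k)).sum :=
            hsd (j+k) (by omega) (by omega)
          have e4 : a1.sum = b1.sum := hjeq
          omega
        -- measures
        have hDle : ∀ i k : ℕ, i ≤ k → k < b.length →
            True := fun _ _ _ _ => trivial
        have hmf : b1.length + (∑ i ∈ Finset.range b1.length,
            ((b1.take (i+1)).sum - (a1.take (i+1)).sum)) ≤ M := by
          have heq : ∀ i ∈ Finset.range j, ((b1.take (i+1)).sum - (a1.take (i+1)).sum)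
              = ((b.take (i+1)).sum - (a.take (i+1)).sum) := by
            intro i hi
            rw [Finset.mem_range] at hi
            rw [ha1, hb1, List.take_take, List.take_take, min_eq_left (by omega)]
          rw [hlb1, Finset.sum_congr rfl heq]
          have hsub : ∑ i ∈ Finset.range j, ((b.take (i+1)).sum - (a.take (i+1)).sum)
              ≤ ∑ i ∈ Finset.range b.length, ((b.take (i+1)).sum - (a.take (i+1)).sum) :=
            Finset.sum_le_sum_of_subset (Finset.range_subset_range.mpr (by omega))
          omega
        have hmb : b2.length + (∑ i ∈ Finset.range b2.length,
            ((b2.take (i+1)).sum - (a2.take (i+1)).sum)) ≤ M := by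
          have heq : ∀ k ∈ Finset.range (b.length - j),
              ((b2.take (k+1)).sum - (a2.take (k+1)).sum)
              = ((b.take (j+k+1)).sum - (a.take (j+k+1)).sum) := by
            intro k hk
            rw [Finset.mem_range] at hk
            have hadd : j + k + 1 = j + (k+1) := by omega
            rw [hadd]
            have e1 : (a.take (j+(k+1))).sum = a1.sum + (a2.take (k+1)).sum := by
              rw [List.take_add, List.sum_append, ha1, ha2]
            have e2 : (b.take (j+(k+1))).sum = b1.sum + (b2.take (k+1)).sum := by
              rw [List.take_add, List.sum_append, hb1, hb2]
            have e4 : a1.sum = b1.sum := hjeq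
            omega
          rw [hlb2, Finset.sum_congr rfl heq]
          have e5 : ∑ k ∈ Finset.range (b.length - j),
              ((b.take (j+k+1)).sum - (a.take (j+k+1)).sum)
              = ∑ i ∈ Finset.Ico j b.length, ((b.take (i+1)).sum - (a.take (i+1)).sum) := by
            rw [Finset.sum_Ico_eq_sum_range]
          have hsub : ∑ i ∈ Finset.Ico j b.length,
                ((b.take (i+1)).sum - (a.take (i+1)).sum)
              ≤ ∑ i ∈ Finset.range b.length, ((b.take (i+1)).sum - (a.take (i+1)).sum) := by
            apply Finset.sum_le_sum_of_subset
            rw [Finset.range_eq_Ico]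
            exact Finset.Ico_subset_Ico (by omega) le_rfl
          omega
        -- recursive calls
        have r1 := ih a1 b1 (hbsort.sublist (List.take_sublist _ _))
          (fun r hr => hapos r (List.take_subset _ _ hr))
          (fun r hr => hbpos r (List.take_subset _ _ hr)) hjeq hb1pos hsd1 hmf n x hx
        have r2 := ih a2 b2 (hbsort.sublist (List.drop_sublist _ _))
          (fun r hr => hapos r (List.drop_subset _ _ hr))
          (fun r hr => hbpos r (List.drop_subset _ _ hr)) hs2 hb2pos hsd2 hmb n x hx
        calc (b.map fun r => psum r x).prod
            = (b1.map fun r => psum r x).prod * (b2.map fun r => psum r x).prod := by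
              conv_lhs => rw [← List.take_append_drop j b]
              rw [List.map_append, List.prod_append, ← hb1, ← hb2]
          _ ≤ (a1.map fun r => psum r x).prod * (a2.map fun r => psum r x).prod := by
              apply mul_le_mul r1 r2 (listProd_psum_nonneg hx _) (listProd_psum_nonneg hx _)
          _ = (a.map fun r => psum r x).prod := by
              conv_rhs => rw [← List.take_append_drop j a]
              rw [List.map_append, List.prod_append, ← ha1, ← ha2]
      -- SPREAD CASE
      · push_neg at htie
        have hstrict : ∀ j, 1 ≤ j → j ≤ b.length - 1 →
            (a.take j).sum + 1 ≤ (b.take j).sum := by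
          intro j hj1 hjm
          have h1 := hsd j hj1 (by omega)
          have h2 := htie j hj1 hjm
          omega
        obtain ⟨p, t, rfl⟩ : ∃ p t, b = p :: t := by
          cases b with
          | nil => exact absurd rfl hb
          | cons p t => exact ⟨p, t, rfl⟩
        obtain ⟨mid, q, rfl⟩ : ∃ mid q, t = mid ++ [q] := by
          rcases List.eq_nil_or_concat t with h | ⟨L, c, h⟩
          · subst h; simp at hm2
          · exact ⟨L, c, by rw [h]; simp [List.concat_eq_append]⟩
        -- abbreviations
        have hlb : (p :: (mid ++ [q])).length = mid.length + 2 := by simp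
        have hmlen : 2 ≤ (p :: (mid ++ [q])).length := hm2
        -- p ≥ 2
        have hA1 : 1 ≤ (a.take 1).sum := by
          have : 0 < (a.take 1).sum := by
            apply List.sum_pos
            · intro r hr; exact hapos r (List.take_subset _ _ hr)
            · intro hnil
              cases a with
              | nil => exact ha rfl
              | cons r t' => simp at hnil
          omega
        have hb1' : ((p :: (mid ++ [q])).take 1).sum = p := by simp
        have hp2 : 2 ≤ p := by
          have h := hstrict 1 le_rfl (by omega)
          rw [hb1'] at h
          omega
        rw [List.pairwise_cons] at hbsort
        obtain ⟨hple, hsort2⟩ := hbsort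
        have hpq : p ≤ q := hple q (by simp)
        have hmidq : ∀ u ∈ mid, u ≤ q := by
          have := (List.pairwise_append.mp hsort2).2.2
          intro u hu; exact this u hu q (by simp)
        have hmidsort : mid.Pairwise (· ≤ ·) := (List.pairwise_append.mp hsort2).1
        -- the new list
        set c : List ℕ := (p-1) :: (mid ++ [q+1]) with hc
        have hlc : c.length = mid.length + 2 := by simp [hc]
        have hcsort : c.Pairwise (· ≤ ·) := by
          rw [hc, List.pairwise_cons]
          constructor
          · intro y hy
            rcases List.mem_append.mp hy with hy | hy
            · have := hple y (List.mem_append.mpr (Or.inl hy)); omega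
            · simp at hy; omega
          · rw [List.pairwise_append]
            refine ⟨hmidsort, by simp, ?_⟩
            intro u hu y hy
            simp at hy
            have := hmidq u hu
            omega
        have hcpos : ∀ r ∈ c, 0 < r := by
          intro r hr
          rw [hc] at hr
          rcases List.mem_cons.mp hr with rfl | hr
          · omega
          · rcases List.mem_append.mp hr with hr | hr
            · exact hbpos r (by simp [hr])
            · simp at hr; omega
        have hcsum : c.sum = (p :: (mid ++ [q])).sum := by
          simp [hc, List.sum_append]
          omega
        -- prefix sums of c
        have hpre : ∀ i, 1 ≤ i → i ≤ mid.length + 1 →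
            (c.take i).sum + 1 = ((p :: (mid ++ [q])).take i).sum := by
          intro i hi1 hi2
          obtain ⟨i', rfl⟩ : ∃ i', i = i' + 1 := ⟨i - 1, by omega⟩
          rw [hc, List.take_succ_cons, List.take_succ_cons, List.sum_cons, List.sum_cons]
          have hi' : i' ≤ mid.length := by omega
          rw [List.take_append_of_le_length hi', List.take_append_of_le_length hi']
          omega
        have hfull : (c.take (mid.length + 2)).sum = ((p :: (mid ++ [q])).take (mid.length + 2)).sum := by
          rw [List.take_of_length_le (by rw [hlc]), List.take_of_length_le (by rw [hlb]), hcsum]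
        -- superdominance for (a, c)
        have hsd' : ∀ jj, 1 ≤ jj → jj ≤ min a.length c.length →
            (a.take jj).sum ≤ (c.take jj).sum := by
          intro jj h1 h2
          rw [hlc] at h2
          rcases Nat.lt_or_ge jj (mid.length + 2) with hlt | hge
          · have h3 := hstrict jj h1 (by omega)
            have h4 := hpre jj h1 (by omega)
            omega
          · have : jj = mid.length + 2 := by omega
            subst this
            rw [hfull]
            exact hsd _ h1 (by omega)
        -- measure decreases
        have hmc : c.length + (∑ i ∈ Finset.range c.length,
            ((c.take (i+1)).sum - (a.take (i+1)).sum)) ≤ M := by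
          have hlt : (∑ i ∈ Finset.range (mid.length + 2),
              ((c.take (i+1)).sum - (a.take (i+1)).sum))
              < (∑ i ∈ Finset.range (mid.length + 2),
              (((p :: (mid ++ [q])).take (i+1)).sum - (a.take (i+1)).sum)) := by
            apply Finset.sum_lt_sum
            · intro i hi
              rw [Finset.mem_range] at hi
              rcases Nat.lt_or_ge (i+1) (mid.length + 2) with hlt | hge
              · have h4 := hpre (i+1) (by omega) (by omega)
                omega
              · have : i + 1 = mid.length + 2 := by omega
                rw [this, hfull]
            · refine ⟨0, Finset.mem_range.mpr (by omega), ?_⟩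
              have h4 := hpre 1 le_rfl (by omega)
              have h5 := hstrict 1 le_rfl (by omega)
              simp only [Nat.zero_add]
              omega
          have hbridge : ∑ i ∈ Finset.range ((p :: (mid ++ [q])).length),
              (((p :: (mid ++ [q])).take (i+1)).sum - (a.take (i+1)).sum)
              = ∑ i ∈ Finset.range (mid.length + 2),
              (((p :: (mid ++ [q])).take (i+1)).sum - (a.take (i+1)).sum) := by rw [hlb]
          rw [hlc]
          omega
        -- analytic step: prod over b ≤ prod over c
        have hspread : ((p :: (mid ++ [q])).map fun r => psum r x).prod
            ≤ (c.map fun r => psum r x).prod := by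
          have h := psum_spread hx (p-1) q (by omega)
          have hp1 : p - 1 + 1 = p := by omega
          rw [hp1] at h
          have hmn : 0 ≤ ((mid.map fun r => psum r x)).prod := listProd_psum_nonneg hx mid
          calc ((p :: (mid ++ [q])).map fun r => psum r x).prod
              = (psum p x * psum q x) * (mid.map fun r => psum r x).prod := by
                simp [List.prod_append]
                ring
            _ ≤ (psum (p-1) x * psum (q+1) x) * (mid.map fun r => psum r x).prod :=
                mul_le_mul_of_nonneg_right h hmn
            _ = (c.map fun r => psum r x).prod := by
                simp [hc, List.prod_append]
                ring
        have hrec := ih a c hcsort hapos hcpos (by rw [hcsum, hsum]) (by rw [hcsum]; exact hbs0)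
          hsd' hmc n x hx
        exact le_trans hspread hrec




/-- split a sorted list at a threshold -/
lemma sorted_split (a : List ℕ) (hs : a.Pairwise (· ≤ ·)) (w : ℕ) :
    ∃ s, s ≤ a.length ∧ (∀ r ∈ a.take s, r < w) ∧ (∀ r ∈ a.drop s, w ≤ r) := by
  induction a with
  | nil => exact ⟨0, by simp⟩
  | cons p t ih =>
    rw [List.pairwise_cons] at hs
    obtain ⟨hp, ht⟩ := hs
    by_cases hpw : p < w
    · obtain ⟨s, hs1, hs2, hs3⟩ := ih ht
      refine ⟨s + 1, by simp; omega, ?_, ?_⟩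
      · intro r hr
        rw [List.take_succ_cons] at hr
        rcases List.mem_cons.mp hr with rfl | hr
        · exact hpw
        · exact hs2 r hr
      · intro r hr
        rw [List.drop_succ_cons] at hr
        exact hs3 r hr
    · refine ⟨0, by simp, by simp, ?_⟩
      intro r hr
      simp at hr
      rcases hr with rfl | hr
      · omega
      · have := hp r hr; omega

lemma segment_le (a : List ℕ) (hs : a.Pairwise (· ≤ ·)) {j : ℕ} (hj1 : 1 ≤ j)
    (hjl : j ≤ a.length) {s : ℕ} (hsj : s ≤ j) :
    (a.take j).sum ≤ (a.take s).sum + (j - s) * a[j-1]'(by omega) := by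
  have hdecomp : (a.take j).sum = (a.take s).sum + ((a.drop s).take (j - s)).sum := by
    have : j = s + (j - s) := by omega
    conv_lhs => rw [this, List.take_add, List.sum_append]
  rw [hdecomp]
  have hlen : ((a.drop s).take (j - s)).length = j - s := by
    rw [List.length_take, List.length_drop]; omega
  have hbound : ∀ r ∈ (a.drop s).take (j - s), r ≤ a[j-1]'(by omega) := by
    intro r hr
    obtain ⟨i, hi, hri⟩ := List.mem_iff_getElem.mp hr
    rw [hlen] at hi
    have h1 : ((a.drop s).take (j-s))[i]'(by rw [hlen]; omega) = a[s+i]'(by omega) := by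
      rw [List.getElem_take, List.getElem_drop]
    rw [h1] at hri
    rw [← hri]
    have : s + i ≤ j - 1 := by omega
    have := hs.rel_get_of_le (a := ⟨s+i, by omega⟩) (b := ⟨j-1, by omega⟩) (by simpa using this)
    simpa using this
  have := List.sum_le_card_nsmul _ _ hbound
  rw [hlen, smul_eq_mul] at this
  omega

lemma segment_ge (a : List ℕ) (hs : a.Pairwise (· ≤ ·)) {j : ℕ} (hj1 : 1 ≤ j)
    (hjl : j ≤ a.length) {s : ℕ} (hjs : j ≤ s) (hsl : s ≤ a.length) :
    (a.take j).sum + (s - j) * a[j-1]'(by omega) ≤ (a.take s).sum := by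
  have hdecomp : (a.take s).sum = (a.take j).sum + ((a.drop j).take (s - j)).sum := by
    have : s = j + (s - j) := by omega
    conv_lhs => rw [this, List.take_add, List.sum_append]
  rw [hdecomp]
  have hlen : ((a.drop j).take (s - j)).length = s - j := by
    rw [List.length_take, List.length_drop]; omega
  have hbound : ∀ r ∈ (a.drop j).take (s - j), a[j-1]'(by omega) ≤ r := by
    intro r hr
    obtain ⟨i, hi, hri⟩ := List.mem_iff_getElem.mp hr
    rw [hlen] at hi
    have h1 : ((a.drop j).take (s-j))[i]'(by rw [hlen]; omega) = a[j+i]'(by omega) := by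
      rw [List.getElem_take, List.getElem_drop]
    rw [h1] at hri
    rw [← hri]
    have : j - 1 ≤ j + i := by omega
    have := hs.rel_get_of_le (a := ⟨j-1, by omega⟩) (b := ⟨j+i, by omega⟩) (by simpa using this)
    simpa using this
  have := List.card_nsmul_le_sum _ _ hbound
  rw [hlen, smul_eq_mul] at this
  omega

/-- the key convexity bound -/
lemma key_bound (a : List ℕ) (hs : a.Pairwise (· ≤ ·)) {j : ℕ} (hj1 : 1 ≤ j)
    (hjl : j ≤ a.length) (Bj : ℕ) (hv : Bj + 1 ≤ (a.take j).sum) :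
    ∀ s, s ≤ a.length →
      Bj + a[j-1]'(by omega) * s + 1 ≤ (a.take s).sum + a[j-1]'(by omega) * j := by
  intro s hsl
  set w := a[j-1]'(by omega) with hw
  rcases le_total s j with hsj | hjs
  · have h1 := segment_le a hs hj1 hjl hsj
    rw [← hw] at h1
    have h2 : (j - s) * w + s * w = j * w := by
      rw [← Nat.add_mul]; congr 1; omega
    have h3 : s * w = w * s := Nat.mul_comm _ _
    have h4 : j * w = w * j := Nat.mul_comm _ _
    omega
  · have h1 := segment_ge a hs hj1 hjl hjs hsl
    rw [← hw] at h1
    have h2 : (s - j) * w + j * w = s * w := by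
      rw [← Nat.add_mul]; congr 1; omega
    have h3 : s * w = w * s := Nat.mul_comm _ _
    have h4 : j * w = w * j := Nat.mul_comm _ _
    omega

lemma map_linear_sum (A B : ℤ) : ∀ (l : List ℕ),
    (l.map (fun r : ℕ => A - B * (r:ℤ))).sum = l.length * A - B * l.sum := by
  intro l
  induction l with
  | nil => simp
  | cons p t ih =>
    simp only [List.map_cons, List.sum_cons, ih, List.length_cons, List.sum_cons]
    push_cast
    ring

lemma map_zpow_prod (N : ℝ) (hN : N ≠ 0) (c : ℕ → ℤ) : ∀ (l : List ℕ),
    (l.map (fun r => N ^ (c r))).prod = N ^ ((l.map c).sum) := by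
  intro l
  induction l with
  | nil => simp
  | cons p t ih =>
    simp only [List.map_cons, List.prod_cons, List.sum_cons, ih, zpow_add₀ hN]

lemma map_prod_nonneg (f : ℕ → ℝ) (l : List ℕ) (hf : ∀ r ∈ l, 0 ≤ f r) :
    0 ≤ (l.map f).prod := by
  induction l with
  | nil => simp
  | cons p t ih =>
    simp only [List.map_cons, List.prod_cons]
    exact mul_nonneg (hf p (by simp)) (ih (fun r hr => hf r (by simp [hr])))

lemma map_prod_le_map_prod (f g : ℕ → ℝ) (l : List ℕ) (hf : ∀ r ∈ l, 0 ≤ f r)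
    (hfg : ∀ r ∈ l, f r ≤ g r) : (l.map f).prod ≤ (l.map g).prod := by
  induction l with
  | nil => simp
  | cons p t ih =>
    simp only [List.map_cons, List.prod_cons]
    have h1 : 0 ≤ (t.map f).prod := map_prod_nonneg f t (fun r hr => hf r (by simp [hr]))
    have h2 : 0 ≤ g p := le_trans (hf p (by simp)) (hfg p (by simp))
    exact mul_le_mul (hfg p (by simp)) (ih (fun r hr => hf r (by simp [hr]))
      (fun r hr => hfg r (by simp [hr]))) h1 h2

lemma map_two_zpow_prod (N : ℝ) (hN : N ≠ 0) (c : ℕ → ℤ) : ∀ (l : List ℕ),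
    (l.map (fun r => 2 * N ^ (c r))).prod = 2 ^ l.length * N ^ ((l.map c).sum) := by
  intro l
  induction l with
  | nil => simp
  | cons p t ih =>
    simp only [List.map_cons, List.prod_cons, List.sum_cons, ih, zpow_add₀ hN,
      List.length_cons, pow_succ]
    ring

lemma psum_eval (k N : ℕ) (ε : ℝ) (r : ℕ) :
    psum r (Fin.append (fun _ : Fin k => ε) (fun _ : Fin N => (1:ℝ)))
      = k * ε ^ r + N := by
  unfold psum
  rw [Fin.sum_univ_add]
  simp [Fin.append_left, Fin.append_right]

lemma append_nonneg {k N : ℕ} {u : Fin k → ℝ} {v : Fin N → ℝ}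
    (hu : ∀ i, 0 ≤ u i) (hv : ∀ i, 0 ≤ v i) : ∀ i, 0 ≤ Fin.append u v i := by
  intro i
  refine Fin.addCases (motive := fun i => 0 ≤ Fin.append u v i) ?_ ?_ i
  · intro i; rw [Fin.append_left]; exact hu i
  · intro i; rw [Fin.append_right]; exact hv i

lemma necessity_list (a b : List ℕ) (ha : a.Pairwise (· ≤ ·)) (j : ℕ) (hj1 : 1 ≤ j)
    (hja : j ≤ a.length) (hjb : j ≤ b.length)
    (hv : (b.take j).sum + 1 ≤ (a.take j).sum) :
    ∃ (n : ℕ) (x : Fin n → ℝ), 0 < n ∧ (∀ i, 0 ≤ x i) ∧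
      (a.map fun r => psum r x).prod < (b.map fun r => psum r x).prod := by
  set ℓ := a.length with hℓ
  set m := b.length with hm
  set w := a[j-1]'(by omega) with hwdef
  set T := ℓ + 1 with hT
  set N := 2^ℓ + 1 with hN
  set k := N^(T*w) with hk
  have hN2 : 2 ≤ N := by
    have : 0 < 2^ℓ := Nat.pow_pos (by norm_num)
    omega
  have hN0 : (N:ℝ) ≠ 0 := by positivity
  have hN1 : (1:ℝ) ≤ (N:ℝ) := by exact_mod_cast Nat.one_le_iff_ne_zero.mpr (by omega)
  set ε : ℝ := (N:ℝ)^(-(T:ℤ)) with hε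
  set x : Fin (k + N) → ℝ := Fin.append (fun _ : Fin k => ε) (fun _ : Fin N => 1) with hx
  have hxnn : ∀ i, 0 ≤ x i := by
    apply append_nonneg
    · intro _; positivity
    · intro _; norm_num
  set e : ℕ → ℤ := fun r => (T:ℤ)*(w:ℤ) - (T:ℤ)*(r:ℤ) with he
  have hpsum : ∀ r : ℕ, psum r x = (N:ℝ)^(e r) + (N:ℝ) := by
    intro r
    rw [hx, psum_eval]
    congr 1
    have h1 : ((k:ℕ):ℝ) = (N:ℝ)^((T*w : ℕ):ℤ) := by
      rw [zpow_natCast]; push_cast [hk]; ring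
    have h2 : ε ^ r = (N:ℝ)^((-(T:ℤ)) * (r:ℤ)) := by
      rw [hε, zpow_mul, zpow_natCast]
    rw [h1, h2, ← zpow_add₀ hN0]
    have h3 : ((T*w : ℕ):ℤ) + (-(T:ℤ)) * (r:ℤ) = e r := by rw [he]; push_cast; ring
    rw [h3]
  -- the exponents for the upper bound
  set cmax : ℕ → ℤ := fun r => max (e r) 1 with hcmax
  set E : ℤ := (a.map cmax).sum with hE
  set Bj : ℕ := (b.take j).sum with hBj
  set F : ℤ := (T:ℤ)*(w:ℤ)*(j:ℤ) - (T:ℤ)*(Bj:ℤ) + ((m:ℤ) - (j:ℤ)) with hF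
  -- upper bound for the a-product
  have hupper : (a.map fun r => psum r x).prod ≤ 2^ℓ * (N:ℝ)^E := by
    have h1 : (a.map fun r => psum r x).prod ≤ (a.map fun r => 2 * (N:ℝ)^(cmax r)).prod := by
      apply map_prod_le_map_prod
      · intro r _; rw [hpsum r]; positivity
      · intro r _
        rw [hpsum r]
        have hle1 : (N:ℝ)^(e r) ≤ (N:ℝ)^(cmax r) :=
          zpow_le_zpow_right₀ hN1 (le_max_left _ _)
        have hle2 : (N:ℝ) ≤ (N:ℝ)^(cmax r) := by
          calc (N:ℝ) = (N:ℝ)^(1:ℤ) := (zpow_one _).symm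
            _ ≤ (N:ℝ)^(cmax r) := zpow_le_zpow_right₀ hN1 (le_max_right _ _)
        linarith
    rw [map_two_zpow_prod (N:ℝ) hN0 cmax a] at h1
    rw [hE]
    exact h1
  -- estimate E
  have hEbound : E ≤ F - 1 := by
    obtain ⟨s₀, hs₀l, hlt, hge⟩ := sorted_split a ha w
    have hsplit : E = ((a.take s₀).map cmax).sum + ((a.drop s₀).map cmax).sum := by
      rw [hE]
      conv_lhs => rw [← List.take_append_drop s₀ a, List.map_append, List.sum_append]
    have h1 : ((a.take s₀).map cmax).sum
        = (s₀:ℤ) * ((T:ℤ)*(w:ℤ)) - (T:ℤ) * ((a.take s₀).sum :ℤ) := by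
      have hc : (a.take s₀).map cmax = (a.take s₀).map (fun r : ℕ => (T:ℤ)*(w:ℤ) - (T:ℤ)*(r:ℤ)) := by
        apply List.map_congr_left
        intro r hr
        have hrw : r < w := hlt r hr
        rw [hcmax]
        dsimp only
        rw [he]
        dsimp only
        rw [max_eq_left]
        have : (r:ℤ) + 1 ≤ (w:ℤ) := by exact_mod_cast hrw
        have hT1 : (1:ℤ) ≤ (T:ℤ) := by exact_mod_cast Nat.le_add_left 1 ℓ
        nlinarith
      rw [hc, map_linear_sum]
      rw [List.length_take]
      have : min s₀ a.length = s₀ := by omega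
      rw [this]
    have h2 : ((a.drop s₀).map cmax).sum = ((ℓ:ℤ) - (s₀:ℤ)) := by
      have hc : (a.drop s₀).map cmax = (a.drop s₀).map (fun _ : ℕ => (1:ℤ)) := by
        apply List.map_congr_left
        intro r hr
        have hrw : w ≤ r := hge r hr
        rw [hcmax]
        dsimp only
        rw [he]
        dsimp only
        rw [max_eq_right]
        have : (w:ℤ) ≤ (r:ℤ) := by exact_mod_cast hrw
        have hT0 : (0:ℤ) ≤ (T:ℤ) := by positivity
        nlinarith
      rw [hc, List.map_const', List.sum_replicate, List.length_drop, nsmul_eq_mul, mul_one]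
      rw [hℓ, Nat.cast_sub hs₀l]
    have hkey := key_bound a ha hj1 hja Bj hv s₀ hs₀l
    rw [← hwdef] at hkey
    have hkeyz : (Bj:ℤ) + (w:ℤ)*(s₀:ℤ) + 1 ≤ ((a.take s₀).sum : ℤ) + (w:ℤ)*(j:ℤ) := by
      exact_mod_cast hkey
    have hkeyT : (T:ℤ) * ((Bj:ℤ) + (w:ℤ)*(s₀:ℤ) + 1) ≤ (T:ℤ) * (((a.take s₀).sum : ℤ) + (w:ℤ)*(j:ℤ)) := by
      apply mul_le_mul_of_nonneg_left hkeyz (by positivity)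
    have hTval : (T:ℤ) = (ℓ:ℤ) + 1 := by rw [hT]; push_cast; ring
    have hjm : (j:ℤ) ≤ (m:ℤ) := by exact_mod_cast hjb
    have hs₀0 : (0:ℤ) ≤ (s₀:ℤ) := by positivity
    rw [hsplit, h1, h2, hF]
    nlinarith [hkeyT, hTval, hjm, hs₀0]
  -- lower bound for the b-product
  have hlower : (N:ℝ)^F ≤ (b.map fun r => psum r x).prod := by
    have hsplitb : (b.map fun r => psum r x).prod
        = ((b.take j).map fun r => psum r x).prod * ((b.drop j).map fun r => psum r x).prod := by
      conv_lhs => rw [← List.take_append_drop j b, List.map_append, List.prod_append]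
    have hP1 : (N:ℝ)^((j:ℤ)*((T:ℤ)*(w:ℤ)) - (T:ℤ)*(Bj:ℤ)) ≤ ((b.take j).map fun r => psum r x).prod := by
      have h1 : ((b.take j).map fun r => (N:ℝ)^(e r)).prod ≤ ((b.take j).map fun r => psum r x).prod := by
        apply map_prod_le_map_prod
        · intro r _; positivity
        · intro r _
          rw [hpsum r]
          have : (0:ℝ) ≤ (N:ℝ) := by positivity
          linarith
      rw [map_zpow_prod (N:ℝ) hN0 e] at h1
      have h2 : ((b.take j).map e).sum = (j:ℤ)*((T:ℤ)*(w:ℤ)) - (T:ℤ)*(Bj:ℤ) := by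
        rw [he, map_linear_sum, List.length_take]
        have : min j b.length = j := by omega
        rw [this, hBj]
      rw [h2] at h1
      exact h1
    have hP2 : (N:ℝ)^(((m:ℤ) - (j:ℤ))) ≤ ((b.drop j).map fun r => psum r x).prod := by
      have h1 : ((b.drop j).map fun _ => (N:ℝ)^((1:ℕ→ℤ) 0)).prod ≤ ((b.drop j).map fun r => psum r x).prod := by
        apply map_prod_le_map_prod
        · intro r _; positivity
        · intro r _
          rw [hpsum r]
          have h3 : (0:ℝ) < (N:ℝ)^(e r) := by positivity
          have h4 : ((N:ℝ))^((1:ℕ→ℤ) 0) = (N:ℝ) := by norm_num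
          rw [h4]; linarith
      have h2 : ((b.drop j).map fun _ => (N:ℝ)^((1:ℕ→ℤ) 0)).prod
          = (N:ℝ)^(((b.drop j).length :ℤ)) := by
        rw [List.map_const', List.prod_replicate, ← zpow_natCast]
        norm_num
      rw [h2] at h1
      rw [List.length_drop] at h1
      have h5 : ((b.length - j : ℕ) : ℤ) = (m:ℤ) - (j:ℤ) := by
        rw [← hm]; omega
      rw [h5] at h1
      exact h1
    calc (N:ℝ)^F = (N:ℝ)^((j:ℤ)*((T:ℤ)*(w:ℤ)) - (T:ℤ)*(Bj:ℤ)) * (N:ℝ)^(((m:ℤ) - (j:ℤ))) := by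
          rw [← zpow_add₀ hN0]
          congr 1
          rw [hF]; ring
      _ ≤ ((b.take j).map fun r => psum r x).prod * ((b.drop j).map fun r => psum r x).prod := by
          apply mul_le_mul hP1 hP2 (by positivity) ?_
          exact le_trans (by positivity) hP1
      _ = (b.map fun r => psum r x).prod := hsplitb.symm
  -- final comparison
  refine ⟨k + N, x, by positivity, hxnn, ?_⟩
  have hc1 : (2:ℝ)^ℓ * (N:ℝ)^E ≤ (2:ℝ)^ℓ * (N:ℝ)^(F-1) := by
    apply mul_le_mul_of_nonneg_left (zpow_le_zpow_right₀ hN1 hEbound) (by positivity)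
  have hc2 : (2:ℝ)^ℓ * (N:ℝ)^(F-1) < (N:ℝ) * (N:ℝ)^(F-1) := by
    apply mul_lt_mul_of_pos_right ?_ (by positivity)
    rw [hN]
    push_cast
    norm_num
  have hc3 : (N:ℝ) * (N:ℝ)^(F-1) = (N:ℝ)^F := by
    calc (N:ℝ) * (N:ℝ)^(F-1) = (N:ℝ)^(1:ℤ) * (N:ℝ)^(F-1) := by rw [zpow_one]
      _ = (N:ℝ)^(1 + (F-1)) := (zpow_add₀ hN0 _ _).symm
      _ = (N:ℝ)^F := by ring_nf
  calc (a.map fun r => psum r x).prod ≤ 2^ℓ * (N:ℝ)^E := hupper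
    _ ≤ (2:ℝ)^ℓ * (N:ℝ)^(F-1) := hc1
    _ < (N:ℝ) * (N:ℝ)^(F-1) := hc2
    _ = (N:ℝ)^F := hc3
    _ ≤ (b.map fun r => psum r x).prod := hlower


section Glue

variable {d : ℕ}

lemma partsAsc_sorted (lam : Nat.Partition d) : (partsAsc lam).Pairwise (· ≤ ·) :=
  lam.parts.pairwise_sort _

lemma partsAsc_pos (lam : Nat.Partition d) : ∀ r ∈ partsAsc lam, 0 < r := by
  intro r hr
  exact lam.parts_pos ((Multiset.mem_sort _).mp hr)

lemma partsAsc_sum (lam : Nat.Partition d) : (partsAsc lam).sum = d := by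
  have h : ((partsAsc lam : List ℕ) : Multiset ℕ) = lam.parts := lam.parts.sort_eq _
  have h2 := lam.parts_sum
  rw [← h] at h2
  simpa using h2

lemma partsAsc_length (lam : Nat.Partition d) : (partsAsc lam).length = len lam :=
  lam.parts.length_sort _

lemma ppart_eq {n : ℕ} (lam : Nat.Partition d) (x : Fin n → ℝ) :
    ppart lam x = ((partsAsc lam).map fun r => psum r x).prod := by
  unfold ppart
  have h : ((partsAsc lam : List ℕ) : Multiset ℕ) = lam.parts := lam.parts.sort_eq _
  rw [← h]
  simp

end Glue

/-- For partitions `λ, μ` of the same positive integer `d`,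
`p_λ ≥ p_μ` on the nonnegative orthant in every number of variables iff `λ ⪰ μ`. -/
theorem powerSum_ge_iff_superDominates {d : ℕ} (hd : 0 < d) (lam mu : Nat.Partition d) :
    (∀ n : ℕ, 0 < n → ∀ x : Fin n → ℝ, (∀ i, 0 ≤ x i) → ppart mu x ≤ ppart lam x) ↔
      SuperDominates lam mu := by
  constructor
  · intro H j hj1 hj2
    by_contra hcon
    push_neg at hcon
    obtain ⟨n, x, hn, hx, hlt⟩ := necessity_list (partsAsc lam) (partsAsc mu)
      (partsAsc_sorted lam) j hj1
      (by rw [partsAsc_length]; omega) (by rw [partsAsc_length]; omega) (by omega)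
    have hle := H n hn x hx
    rw [ppart_eq, ppart_eq] at hle
    linarith
  · intro hsd n _hn x hx
    rw [ppart_eq, ppart_eq]
    apply suff_list ((partsAsc mu).length + (∑ i ∈ Finset.range (partsAsc mu).length,
      (((partsAsc mu).take (i+1)).sum - ((partsAsc lam).take (i+1)).sum)))
      (partsAsc lam) (partsAsc mu) (partsAsc_sorted mu) (partsAsc_pos lam) (partsAsc_pos mu)
      (by rw [partsAsc_sum, partsAsc_sum]) (by rw [partsAsc_sum]; exact hd) ?_ le_rfl n x hx
    intro j hj1 hj2
    rw [partsAsc_length, partsAsc_length] at hj2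
    exact hsd j hj1 hj2
end

section
/- Let λ and μ be partitions of the same positive integer d. Then λ covers μ in the superdominance order if and only if one of the following holds: (i) ℓ(λ) = ℓ(μ) and λ covers μ in the dominance order; or (ii) ℓ(λ) ≥ 2, λ_1 − λ_2 ≤ 1, and μ = λ*. -/
open scoped BigOperators

/-- The parts of a partition listed in decreasing order. -/
def partsDesc {d : ℕ} (lam : Nat.Partition d) : List ℕ :=
  (partsAsc lam).reverse

/-- `lam ≻ mu`: strict superdominance. -/
def StrictSuperDominates {d : ℕ} (lam mu : Nat.Partition d) : Prop :=
  SuperDominates lam mu ∧ lam ≠ mu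

/-- `lam` covers `mu` in the superdominance order. -/
def SCovers {d : ℕ} (lam mu : Nat.Partition d) : Prop :=
  StrictSuperDominates lam mu ∧
    ¬ ∃ nu : Nat.Partition d, StrictSuperDominates lam nu ∧ StrictSuperDominates nu mu

/-- `lam` dominates `mu`: for each `j = 1, …, min(ℓ(lam), ℓ(mu))`, the sum of the
`j` largest parts of `lam` is at least the sum of the `j` largest parts of `mu`. -/
def Dominates {d : ℕ} (lam mu : Nat.Partition d) : Prop :=
  ∀ j : ℕ, 1 ≤ j → j ≤ min (len lam) (len mu) →
    ((partsDesc mu).take j).sum ≤ ((partsDesc lam).take j).sum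

/-- `lam` covers `mu` in the dominance order. -/
def DCovers {d : ℕ} (lam mu : Nat.Partition d) : Prop :=
  Dominates lam mu ∧ lam ≠ mu ∧
    ¬ ∃ nu : Nat.Partition d, Dominates lam nu ∧ Dominates nu mu ∧ nu ≠ lam ∧ nu ≠ mu

/-- The multiset of parts of `λ*`, the partition obtained from `λ` by merging its two
largest parts `λ₁, λ₂` into the single part `λ₁ + λ₂`. -/
def starParts {d : ℕ} (lam : Nat.Partition d) : Multiset ℕ :=
  ((partsDesc lam).getD 0 0 + (partsDesc lam).getD 1 0) ::ₘ
    (((partsDesc lam).drop 2 : List ℕ) : Multiset ℕ)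

namespace SCoversAux

variable {d : ℕ}

lemma coe_partsAsc (p : Nat.Partition d) : (↑(partsAsc p) : Multiset ℕ) = p.parts :=
  Multiset.sort_eq _ _

lemma sorted_partsAsc (p : Nat.Partition d) : (partsAsc p).Pairwise (· ≤ ·) :=
  Multiset.pairwise_sort _ _

lemma length_partsAsc (p : Nat.Partition d) : (partsAsc p).length = len p := by
  rw [len, ← coe_partsAsc, Multiset.coe_card]

lemma sum_partsAsc (p : Nat.Partition d) : (partsAsc p).sum = d := by
  rw [← Multiset.sum_coe, coe_partsAsc]; exact p.parts_sum

lemma pos_of_mem_partsAsc {p : Nat.Partition d} {x : ℕ} (hx : x ∈ partsAsc p) : 0 < x :=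
  p.parts_pos (by rw [← coe_partsAsc]; exact_mod_cast hx)

lemma ext_partsAsc {p q : Nat.Partition d} (h : partsAsc p = partsAsc q) : p = q := by
  apply Nat.Partition.ext; rw [← coe_partsAsc p, ← coe_partsAsc q, h]

/-- Partial sums of the ascending parts. -/
def S (p : Nat.Partition d) (j : ℕ) : ℕ := ((partsAsc p).take j).sum

lemma S_add (p : Nat.Partition d) {i j : ℕ} (h : i ≤ j) :
    S p i + (((partsAsc p).take j).drop i).sum = S p j := by
  have h1 := congrArg List.sum (List.take_append_drop i ((partsAsc p).take j))
  rw [List.sum_append, List.take_take, min_eq_left h] at h1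
  exact h1

lemma S_mono (p : Nat.Partition d) {i j : ℕ} (h : i ≤ j) : S p i ≤ S p j := by
  have := S_add p h; omega

lemma S_eq_d (p : Nat.Partition d) {j : ℕ} (h : len p ≤ j) : S p j = d := by
  rw [S, List.take_of_length_le (by rw [length_partsAsc]; exact h), sum_partsAsc]

lemma S_le_d (p : Nat.Partition d) (j : ℕ) : S p j ≤ d := by
  have h1 : S p j ≤ S p (len p) := by
    rcases le_or_gt j (len p) with h | h
    · exact S_mono p h
    · rw [S_eq_d p h.le, S_eq_d p le_rfl]
  rw [S_eq_d p le_rfl] at h1; exact h1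

lemma len_pos (hd : 0 < d) (p : Nat.Partition d) : 0 < len p := by
  by_contra h
  have h0 : len p = 0 := by omega
  have := sum_partsAsc p
  have hl : (partsAsc p).length = 0 := by rw [length_partsAsc, h0]
  rw [List.length_eq_zero_iff] at hl
  rw [hl] at this
  simp at this; omega

lemma S_lt_d (p : Nat.Partition d) {j : ℕ} (h : j < len p) : S p j < d := by
  have h1 := S_add p h.le
  rw [S_eq_d p le_rfl] at h1
  have h2 : ((partsAsc p).take (len p)).drop j = (partsAsc p).drop j := by
    rw [List.take_of_length_le (by rw [length_partsAsc])]
  rw [h2] at h1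
  have h3 : ((partsAsc p).drop j).length = len p - j := by
    rw [List.length_drop, length_partsAsc]
  have h4 : (partsAsc p).drop j ≠ [] := by
    intro hc; rw [hc] at h3; simp at h3; omega
  obtain ⟨x, t, hxt⟩ := List.exists_cons_of_ne_nil h4
  have hx : 0 < x := pos_of_mem_partsAsc (List.mem_of_mem_drop (by rw [hxt]; exact List.mem_cons_self))
  rw [hxt] at h1
  simp [List.sum_cons] at h1
  omega

lemma S_pos (hd : 0 < d) (p : Nat.Partition d) {j : ℕ} (hj : 1 ≤ j) : 0 < S p j := by
  have h1 : 0 < S p 1 := by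
    have hl : 0 < (partsAsc p).length := by rw [length_partsAsc]; exact len_pos hd p
    obtain ⟨x, t, hxt⟩ := List.exists_cons_of_ne_nil (List.length_pos_iff.mp hl)
    have hx : 0 < x := pos_of_mem_partsAsc (by rw [hxt]; exact List.mem_cons_self)
    rw [S, hxt]; simpa using hx
  exact lt_of_lt_of_le h1 (S_mono p hj)

lemma length_partsDesc (p : Nat.Partition d) : (partsDesc p).length = len p := by
  rw [partsDesc, List.length_reverse, length_partsAsc]

lemma desc_take_sum (p : Nat.Partition d) {j : ℕ} (hj : j ≤ len p) :
    ((partsDesc p).take j).sum + S p (len p - j) = d := by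
  have h2 : (partsDesc p).drop j = ((partsAsc p).take (len p - j)).reverse := by
    rw [List.reverse_take, length_partsAsc, partsDesc]
    congr 1
    omega
  have h1 := congrArg List.sum (List.take_append_drop j (partsDesc p))
  rw [List.sum_append, h2, List.sum_reverse] at h1
  rw [partsDesc, List.sum_reverse, sum_partsAsc] at h1
  exact h1

lemma superDominates_iff_dominates {p q : Nat.Partition d} (h : len p = len q) :
    SuperDominates p q ↔ Dominates p q := by
  constructor
  · intro hs j hj1 hj2
    have hj : j ≤ len p := le_trans hj2 (min_le_left _ _)
    have e1 := desc_take_sum p hj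
    have e2 := desc_take_sum q (h ▸ hj)
    rw [← h] at e2
    have key : S p (len p - j) ≤ S q (len p - j) := by
      rcases Nat.eq_zero_or_pos (len p - j) with h0 | h0
      · rw [h0]; simp [S]
      · exact hs _ h0 (by omega)
    omega
  · intro hdom j hj1 hj2
    have hj : j ≤ len p := le_trans hj2 (min_le_left _ _)
    show S p j ≤ S q j
    rcases eq_or_lt_of_le hj with heq | hlt
    · subst heq
      rw [S_eq_d p le_rfl, S_eq_d q (le_of_eq h.symm)]
    · have h1 := hdom (len p - j) (by omega) (by omega)
      have e1 := desc_take_sum p (show len p - j ≤ len p by omega)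
      have e2 := desc_take_sum q (show len p - j ≤ len q by omega)
      rw [← h, show len p - (len p - j) = j from by omega] at e2
      rw [show len p - (len p - j) = j from by omega] at e1
      omega

lemma len_le_of_superDominates (hd : 0 < d) {p q : Nat.Partition d}
    (h : SuperDominates p q) : len q ≤ len p := by
  by_contra hc
  push_neg at hc
  have h1 := h (len p) (len_pos hd p) (by omega)
  have h2 : S p (len p) = d := S_eq_d p le_rfl
  have h3 : S q (len p) < d := S_lt_d q hc
  have : S p (len p) ≤ S q (len p) := h1
  omega

lemma len_le_of_dominates (hd : 0 < d) {p q : Nat.Partition d}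
    (h : Dominates p q) : len p ≤ len q := by
  by_contra hc
  push_neg at hc
  have h1 := h (len q) (len_pos hd q) (by omega)
  have e1 := desc_take_sum q (le_refl (len q))
  have e2 := desc_take_sum p (show len q ≤ len p by omega)
  rw [Nat.sub_self] at e1
  have e3 : S q 0 = 0 := by simp [S]
  have e4 : 0 < S p (len p - len q) := S_pos hd p (by omega)
  omega

lemma exists_decomp {p : Nat.Partition d} (h : 2 ≤ len p) :
    ∃ (T : List ℕ) (b a : ℕ), partsAsc p = T ++ [b, a] ∧ b ≤ a ∧ (∀ x ∈ T, x ≤ b) ∧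
      partsDesc p = a :: b :: T.reverse := by
  have hl : 2 ≤ (partsDesc p).length := by rw [length_partsDesc]; exact h
  obtain ⟨a, l1, hal⟩ := List.exists_cons_of_ne_nil
    (show partsDesc p ≠ [] by intro hc; rw [hc] at hl; simp at hl)
  have hl1 : 1 ≤ l1.length := by rw [hal] at hl; simp at hl; omega
  obtain ⟨b, R, hbR⟩ := List.exists_cons_of_ne_nil
    (show l1 ≠ [] by intro hc; rw [hc] at hl1; simp at hl1)
  refine ⟨R.reverse, b, a, ?_, ?_, ?_, ?_⟩
  · have : partsAsc p = (partsDesc p).reverse := by rw [partsDesc, List.reverse_reverse]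
    rw [this, hal, hbR]
    simp
  · have hs := sorted_partsAsc p
    have hA : partsAsc p = R.reverse ++ [b, a] := by
      have : partsAsc p = (partsDesc p).reverse := by rw [partsDesc, List.reverse_reverse]
      rw [this, hal, hbR]; simp
    rw [hA, List.pairwise_append] at hs
    have := hs.2.1
    simpa using this
  · intro x hx
    have hs := sorted_partsAsc p
    have hA : partsAsc p = R.reverse ++ [b, a] := by
      have : partsAsc p = (partsDesc p).reverse := by rw [partsDesc, List.reverse_reverse]
      rw [this, hal, hbR]; simp
    rw [hA, List.pairwise_append] at hs
    exact hs.2.2 x hx b (by simp)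
  · rw [hal, hbR]; simp

/-- Build a partition from a list of positive numbers summing to `d`. -/
def ofList (l : List ℕ) (hpos : ∀ x ∈ l, 0 < x) (hsum : l.sum = d) : Nat.Partition d :=
  ⟨(l : Multiset ℕ), fun {i} hi => hpos i (by exact_mod_cast hi), by
    rw [Multiset.sum_coe]; exact hsum⟩

lemma parts_ofList (l : List ℕ) (hpos : ∀ x ∈ l, 0 < x) (hsum : l.sum = d) :
    (ofList l hpos hsum).parts = (l : Multiset ℕ) := rfl

lemma partsAsc_ofList (l : List ℕ) (hpos : ∀ x ∈ l, 0 < x) (hsum : l.sum = d)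
    (hsort : l.Pairwise (· ≤ ·)) : partsAsc (ofList l hpos hsum) = l := by
  apply List.Perm.eq_of_pairwise' (sorted_partsAsc _) hsort
  rw [← Multiset.coe_eq_coe, coe_partsAsc, parts_ofList]

lemma partsAsc_eq_of_parts_coe {p : Nat.Partition d} {l : List ℕ}
    (h : p.parts = (l : Multiset ℕ)) (hsort : l.Pairwise (· ≤ ·)) : partsAsc p = l := by
  apply List.Perm.eq_of_pairwise' (sorted_partsAsc _) hsort
  rw [← Multiset.coe_eq_coe, coe_partsAsc, h]

lemma take_sum_append_of_le {T l : List ℕ} {j : ℕ} (hj : j ≤ T.length) :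
    ((T ++ l).take j).sum = (T.take j).sum := by
  rw [List.take_append, Nat.sub_eq_zero_of_le hj]
  simp

lemma take_sum_append_succ (T l : List ℕ) (x : ℕ) :
    ((T ++ (x :: l)).take (T.length + 1)).sum = T.sum + x := by
  rw [List.take_append, List.take_of_length_le (by omega),
    Nat.add_sub_cancel_left]
  simp

lemma take_eq_of_sum_take_eq {l m : List ℕ} {k : ℕ} (hl : k ≤ l.length) (hm : k ≤ m.length)
    (h : ∀ j ≤ k, (l.take j).sum = (m.take j).sum) : l.take k = m.take k := by
  induction k with
  | zero => simp
  | succ k ih =>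
    have hk := ih (by omega) (by omega) (fun j hj => h j (by omega))
    have h1 := List.sum_take_succ l k (by omega)
    have h2 := List.sum_take_succ m k (by omega)
    have hget : l[k] = m[k] := by
      have ha := h (k + 1) le_rfl
      have hb := h k (by omega)
      omega
    rw [List.take_succ, List.take_succ, hk,
      List.getElem?_eq_getElem (show k < l.length by omega),
      List.getElem?_eq_getElem (show k < m.length by omega), hget]

end SCoversAux

namespace SCoversAux

section CaseB

variable {d : ℕ} {lam q : Nat.Partition d} {T : List ℕ} {b a : ℕ}

lemma len_lam_eq (hA : partsAsc lam = T ++ [b, a]) : len lam = T.length + 2 := by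
  rw [← length_partsAsc, hA]; simp

lemma len_q_eq (hq : partsAsc q = T ++ [a + b]) : len q = T.length + 1 := by
  rw [← length_partsAsc, hq]; simp

lemma sum_eq (hA : partsAsc lam = T ++ [b, a]) : T.sum + b + a = d := by
  have h := sum_partsAsc lam
  rw [hA, List.sum_append] at h
  simp at h
  omega

lemma L1 (hA : partsAsc lam = T ++ [b, a]) (hq : partsAsc q = T ++ [a + b]) :
    StrictSuperDominates lam q := by
  constructor
  · intro j hj1 hj2
    rw [len_lam_eq hA, len_q_eq hq] at hj2
    rcases le_or_gt j T.length with hle | hgt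
    · rw [hA, hq, take_sum_append_of_le hle, take_sum_append_of_le hle]
    · have hj' : j = T.length + 1 := by omega
      subst hj'
      rw [hA, hq, take_sum_append_succ, take_sum_append_succ]
      omega
  · intro hc
    have h1 := len_lam_eq hA
    rw [hc, len_q_eq hq] at h1
    omega

lemma L2 (hA : partsAsc lam = T ++ [b, a]) (hq : partsAsc q = T ++ [a + b])
    {mu : Nat.Partition d} (hsd : SuperDominates lam mu) (hlen : len mu ≤ T.length + 1) :
    SuperDominates q mu := by
  intro j hj1 hj2
  rw [len_q_eq hq] at hj2
  have hjmu : j ≤ len mu := by omega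
  rcases le_or_gt j T.length with hle | hgt
  · have h1 := hsd j hj1 (by rw [len_lam_eq hA]; omega)
    calc ((partsAsc q).take j).sum = ((partsAsc lam).take j).sum := by
          rw [hA, hq, take_sum_append_of_le hle, take_sum_append_of_le hle]
      _ ≤ _ := h1
  · have hj' : j = T.length + 1 := by omega
    subst hj'
    have h2 : ((partsAsc mu).take (T.length + 1)).sum = d := S_eq_d mu (by omega)
    have h3 : ((partsAsc q).take (T.length + 1)).sum = T.sum + (a + b) := by
      rw [hq, take_sum_append_succ]
    rw [h2, h3]
    have := sum_eq hA
    omega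

lemma L3 (hd : 0 < d) (hA : partsAsc lam = T ++ [b, a]) (hq : partsAsc q = T ++ [a + b])
    (hab : a ≤ b + 1) {nu : Nat.Partition d}
    (h1 : StrictSuperDominates lam nu) (h2 : StrictSuperDominates nu q) : False := by
  obtain ⟨hs1, hne1⟩ := h1
  obtain ⟨hs2, hne2⟩ := h2
  have hllam := len_lam_eq hA
  have hlq := len_q_eq hq
  have hn1 : len nu ≤ T.length + 2 := by
    have := len_le_of_superDominates hd hs1; omega
  have hn2 : T.length + 1 ≤ len nu := by
    have := len_le_of_superDominates hd hs2; omega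
  have hpre : ∀ j ≤ T.length, ((partsAsc nu).take j).sum = (T.take j).sum := by
    intro j hj
    rcases Nat.eq_zero_or_pos j with rfl | hj0
    · simp
    · have e1 : ((partsAsc lam).take j).sum ≤ ((partsAsc nu).take j).sum :=
        hs1 j hj0 (by omega)
      have e2 : ((partsAsc nu).take j).sum ≤ ((partsAsc q).take j).sum :=
        hs2 j hj0 (by omega)
      rw [hA, take_sum_append_of_le hj] at e1
      rw [hq, take_sum_append_of_le hj] at e2
      omega
  have htake : (partsAsc nu).take T.length = T := by
    have h := take_eq_of_sum_take_eq (l := partsAsc nu) (m := T)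
      (by rw [length_partsAsc]; omega) le_rfl hpre
    rwa [List.take_length] at h
  have hlen_nu : (partsAsc nu).length = len nu := length_partsAsc nu
  have hsplit : partsAsc nu = T ++ (partsAsc nu).drop T.length := by
    conv_lhs => rw [← List.take_append_drop T.length (partsAsc nu)]
    rw [htake]
  have hsum_nu := sum_partsAsc nu
  have hsum_lam := sum_eq hA
  rcases (by omega : len nu = T.length + 1 ∨ len nu = T.length + 2) with hcase | hcase
  · have hdlen : ((partsAsc nu).drop T.length).length = 1 := by
      rw [List.length_drop, hlen_nu, hcase]; omega
    obtain ⟨c, hc⟩ := List.length_eq_one_iff.mp hdlen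
    rw [hc] at hsplit
    have hcsum : T.sum + c = d := by
      rw [hsplit, List.sum_append] at hsum_nu; simp at hsum_nu; omega
    have hceq : c = a + b := by omega
    exact hne2 (ext_partsAsc (by rw [hsplit, hq, hceq]))
  · have hdlen : ((partsAsc nu).drop T.length).length = 2 := by
      rw [List.length_drop, hlen_nu, hcase]; omega
    obtain ⟨b', a', hba'⟩ := List.length_eq_two.mp hdlen
    rw [hba'] at hsplit
    have hsum' : T.sum + b' + a' = d := by
      rw [hsplit, List.sum_append] at hsum_nu; simp at hsum_nu; omega
    have hsort : b' ≤ a' := by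
      have hs := sorted_partsAsc nu
      rw [hsplit, List.pairwise_append] at hs
      simpa using hs.2.1
    have hbb' : b ≤ b' := by
      have h := hs1 (T.length + 1) (by omega) (by omega)
      rw [hA, hsplit, take_sum_append_succ, take_sum_append_succ] at h
      omega
    have hnelam : b' ≠ b ∨ a' ≠ a := by
      by_contra hc
      push_neg at hc
      exact hne1 (ext_partsAsc (by rw [hA, hsplit, hc.1, hc.2])).symm
    omega

lemma L5 (hA : partsAsc lam = T ++ [b, a]) (hq : partsAsc q = T ++ [a + b])
    {r : Nat.Partition d} (hr : partsAsc r = T ++ [b + 1, a - 1]) (hab : b + 2 ≤ a) :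
    StrictSuperDominates lam r ∧ StrictSuperDominates r q := by
  have hlr : len r = T.length + 2 := by rw [← length_partsAsc, hr]; simp
  have hllam := len_lam_eq hA
  have hlq := len_q_eq hq
  constructor
  · constructor
    · intro j hj1 hj2
      rw [hllam, hlr] at hj2
      rcases le_or_gt j T.length with hle | hgt
      · rw [hA, hr, take_sum_append_of_le hle, take_sum_append_of_le hle]
      · rcases (by omega : j = T.length + 1 ∨ j = T.length + 2) with hj' | hj'
        · subst hj'
          rw [hA, hr, take_sum_append_succ, take_sum_append_succ]
          omega
        · subst hj'
          have e1 : ((partsAsc lam).take (T.length + 2)).sum = d := S_eq_d lam (by omega)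
          have e2 : ((partsAsc r).take (T.length + 2)).sum = d := S_eq_d r (by omega)
          omega
    · intro hc
      have h : partsAsc lam = partsAsc r := by rw [hc]
      rw [hA, hr] at h
      have := List.append_inj_right h rfl
      simp at this
  · constructor
    · intro j hj1 hj2
      rw [hlr, hlq] at hj2
      rcases le_or_gt j T.length with hle | hgt
      · rw [hr, hq, take_sum_append_of_le hle, take_sum_append_of_le hle]
      · have hj' : j = T.length + 1 := by omega
        subst hj'
        rw [hr, hq, take_sum_append_succ, take_sum_append_succ]
        omega
    · intro hc
      have h1 := hlr
      rw [hc, hlq] at h1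
      omega

lemma star_coe (hD : partsDesc lam = a :: b :: T.reverse) :
    starParts lam = ((T ++ [a + b] : List ℕ) : Multiset ℕ) := by
  rw [starParts, hD]
  show (a + b) ::ₘ (↑(T.reverse) : Multiset ℕ) = _
  rw [Multiset.cons_coe, Multiset.coe_eq_coe]
  exact (List.Perm.cons _ T.reverse_perm).trans (List.perm_append_singleton _ T).symm

lemma sorted_star (hA : partsAsc lam = T ++ [b, a]) (hTb : ∀ x ∈ T, x ≤ b) :
    (T ++ [a + b]).Pairwise (· ≤ ·) := by
  rw [List.pairwise_append]
  refine ⟨?_, by simp, ?_⟩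
  · have hs := sorted_partsAsc lam
    rw [hA, List.pairwise_append] at hs
    exact hs.1
  · intro x hx y hy
    simp at hy
    subst hy
    have := hTb x hx
    omega

end CaseB

section Main

variable {d : ℕ}

lemma forward_case_a (hd : 0 < d) (lam mu : Nat.Partition d) (hsd : SuperDominates lam mu)
    (hne : lam ≠ mu)
    (hnex : ¬ ∃ nu : Nat.Partition d, StrictSuperDominates lam nu ∧ StrictSuperDominates nu mu)
    (hlen : len lam = len mu) : DCovers lam mu := by
  refine ⟨(superDominates_iff_dominates hlen).1 hsd, hne, ?_⟩
  rintro ⟨nu, h1, h2, hn1, hn2⟩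
  have l1 : len lam ≤ len nu := len_le_of_dominates hd h1
  have l2 : len nu ≤ len mu := len_le_of_dominates hd h2
  exact hnex ⟨nu, ⟨(superDominates_iff_dominates (by omega)).2 h1, fun h => hn1 h.symm⟩,
    ⟨(superDominates_iff_dominates (by omega)).2 h2, hn2⟩⟩

lemma backward_case_a (hd : 0 < d) (lam mu : Nat.Partition d) (hlen : len lam = len mu)
    (hdc : DCovers lam mu) : SCovers lam mu := by
  obtain ⟨hdom, hne, hnex⟩ := hdc
  refine ⟨⟨(superDominates_iff_dominates hlen).2 hdom, hne⟩, ?_⟩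
  rintro ⟨nu, ⟨h1, hn1⟩, ⟨h2, hn2⟩⟩
  have l1 : len nu ≤ len lam := len_le_of_superDominates hd h1
  have l2 : len mu ≤ len nu := len_le_of_superDominates hd h2
  exact hnex ⟨nu, (superDominates_iff_dominates (by omega)).1 h1,
    (superDominates_iff_dominates (by omega)).1 h2, fun h => hn1 h.symm, hn2⟩

lemma forward_case_b (hd : 0 < d) (lam mu : Nat.Partition d) (hsd : SuperDominates lam mu)
    (hne : lam ≠ mu)
    (hnex : ¬ ∃ nu : Nat.Partition d, StrictSuperDominates lam nu ∧ StrictSuperDominates nu mu)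
    (hlt : len mu < len lam) :
    2 ≤ len lam ∧ (partsDesc lam).getD 0 0 - (partsDesc lam).getD 1 0 ≤ 1 ∧
      mu.parts = starParts lam := by
  have h2 : 2 ≤ len lam := by have := len_pos hd mu; omega
  obtain ⟨T, b, a, hA, hba, hTb, hD⟩ := exists_decomp h2
  have hllam := len_lam_eq hA
  have hposT : ∀ x ∈ T ++ [b, a], 0 < x := fun x hx => pos_of_mem_partsAsc (hA ▸ hx)
  have hb : 0 < b := hposT b (by simp)
  have ha : 0 < a := hposT a (by simp)
  have hsum := sum_eq hA
  have hpos' : ∀ x ∈ T ++ [a + b], 0 < x := by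
    intro x hx
    rcases List.mem_append.mp hx with h | h
    · exact hposT x (List.mem_append.mpr (Or.inl h))
    · simp at h; omega
  have hsum' : (T ++ [a + b]).sum = d := by
    rw [List.sum_append]; simp; omega
  set q : Nat.Partition d := ofList (T ++ [a + b]) hpos' hsum' with hqdef
  have hq : partsAsc q = T ++ [a + b] := partsAsc_ofList _ _ _ (sorted_star hA hTb)
  have hstar : starParts lam = q.parts := by
    rw [star_coe hD, hqdef, parts_ofList]
  have hmueq : mu = q := by
    by_contra hc
    exact hnex ⟨q, L1 hA hq, L2 hA hq hsd (by omega), fun h => hc h.symm⟩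
  have hab : a - b ≤ 1 := by
    by_contra hcc
    have hab2 : b + 2 ≤ a := by omega
    have hposr : ∀ x ∈ T ++ [b + 1, a - 1], 0 < x := by
      intro x hx
      rcases List.mem_append.mp hx with h | h
      · exact hposT x (List.mem_append.mpr (Or.inl h))
      · simp at h; omega
    have hsumr : (T ++ [b + 1, a - 1]).sum = d := by
      rw [List.sum_append]; simp; omega
    have hsortr : (T ++ [b + 1, a - 1]).Pairwise (· ≤ ·) := by
      rw [List.pairwise_append]
      refine ⟨?_, ?_, ?_⟩
      · have hs := sorted_partsAsc lam
        rw [hA, List.pairwise_append] at hs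
        exact hs.1
      · simp; omega
      · intro x hx y hy
        have hxb := hTb x hx
        simp at hy
        rcases hy with rfl | rfl <;> omega
    set r : Nat.Partition d := ofList (T ++ [b + 1, a - 1]) hposr hsumr with hrdef
    have hr : partsAsc r = T ++ [b + 1, a - 1] := partsAsc_ofList _ _ _ hsortr
    obtain ⟨hL5a, hL5b⟩ := L5 hA hq hr hab2
    exact hnex ⟨r, hL5a, hmueq ▸ hL5b⟩
  refine ⟨h2, ?_, by rw [hmueq, hstar]⟩
  rw [hD]
  show a - b ≤ 1
  exact hab

lemma backward_case_b (hd : 0 < d) (lam mu : Nat.Partition d) (h2 : 2 ≤ len lam)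
    (habd : (partsDesc lam).getD 0 0 - (partsDesc lam).getD 1 0 ≤ 1)
    (hparts : mu.parts = starParts lam) : SCovers lam mu := by
  obtain ⟨T, b, a, hA, hba, hTb, hD⟩ := exists_decomp h2
  have hab : a - b ≤ 1 := by rw [hD] at habd; exact habd
  have hmu : partsAsc mu = T ++ [a + b] := by
    apply partsAsc_eq_of_parts_coe _ (sorted_star hA hTb)
    rw [hparts, star_coe hD]
  exact ⟨L1 hA hmu, fun ⟨nu, s1, s2⟩ => L3 hd hA hmu (by omega) s1 s2⟩

end Main

end SCoversAux

/-- `λ` covers `μ` in the superdominance order iff either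
(i) `ℓ(λ) = ℓ(μ)` and `λ` covers `μ` in the dominance order, or
(ii) `ℓ(λ) ≥ 2`, `λ₁ - λ₂ ≤ 1` and `μ = λ*`. -/
theorem sCovers_iff {d : ℕ} (hd : 0 < d) (lam mu : Nat.Partition d) :
    SCovers lam mu ↔
      ((len lam = len mu ∧ DCovers lam mu) ∨
        (2 ≤ len lam ∧ (partsDesc lam).getD 0 0 - (partsDesc lam).getD 1 0 ≤ 1 ∧
          mu.parts = starParts lam)) := by
  constructor
  · rintro ⟨⟨hsd, hne⟩, hnex⟩
    rcases (SCoversAux.len_le_of_superDominates hd hsd).lt_or_eq with hlt | heq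
    · exact Or.inr (SCoversAux.forward_case_b hd lam mu hsd hne hnex hlt)
    · exact Or.inl ⟨heq.symm, SCoversAux.forward_case_a hd lam mu hsd hne hnex heq.symm⟩
  · rintro (⟨hlen, hdc⟩ | ⟨hl2, hab, hparts⟩)
    · exact SCoversAux.backward_case_a hd lam mu hlen hdc
    · exact SCoversAux.backward_case_b hd lam mu hl2 hab hparts
end

section
/- Let k ≥ 2 and for each i = 1, …, k let λ^i and μ^i be partitions of the same positive integer d_i with λ^i ⪰ μ^i. Then the fusion λ^1λ^2⋯λ^k superdominates the fusion μ^1μ^2⋯μ^k. -/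
open scoped BigOperators

lemma sum_take_le_of_sublist {l₁ l₂ : List ℕ} (hsub : List.Sublist l₁ l₂)
    (hs : l₂.Pairwise (· ≤ ·)) : (l₂.take l₁.length).sum ≤ l₁.sum := by
  induction hsub with
  | slnil => simp
  | @cons l₁ l₂ a hsub ih =>
    have hs2 : l₂.Pairwise (· ≤ ·) := hs.of_cons
    have ha : ∀ b ∈ l₂, a ≤ b := (List.pairwise_cons.mp hs).1
    have ih := ih hs2
    rcases Nat.eq_zero_or_pos l₁.length with h0 | hpos
    · simp [h0]
    obtain ⟨n, hn⟩ : ∃ n, l₁.length = n + 1 := ⟨l₁.length - 1, by omega⟩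
    rw [hn]
    have hlen : n + 1 ≤ l₂.length := hn ▸ hsub.length_le
    have hlt : n < l₂.length := by omega
    rw [List.take_succ_cons]
    have hstep : (l₂.take (n+1)).sum = (l₂.take n).sum + l₂.get ⟨n, hlt⟩ :=
      List.sum_take_succ l₂ n hlt
    have : a ≤ l₂.get ⟨n, hlt⟩ := ha _ (List.get_mem l₂ _)
    rw [hn] at ih
    simp only [List.sum_cons]
    omega
  | @cons_cons l₁ l₂ a hsub ih =>
    have ih := ih hs.of_cons
    simpa using Nat.add_le_add_left ih a

lemma sum_take_sort_le (m s : Multiset ℕ) (hle : s ≤ m) :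
    ((m.sort (· ≤ ·)).take (Multiset.card s)).sum ≤ s.sum := by
  have h1 : (s.toList : Multiset ℕ) ≤ ((m.sort (· ≤ ·) : List ℕ) : Multiset ℕ) := by
    rw [Multiset.coe_toList, Multiset.sort_eq]; exact hle
  obtain ⟨l, hperm, hsub⟩ := Multiset.coe_le.mp h1
  have hlen : l.length = Multiset.card s := by
    rw [hperm.length_eq, Multiset.length_toList]
  have hsum : l.sum = s.sum := by
    rw [hperm.sum_eq, ← Multiset.sum_coe, Multiset.coe_toList]
  calc ((m.sort (· ≤ ·)).take (Multiset.card s)).sum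
      = ((m.sort (· ≤ ·)).take l.length).sum := by rw [hlen]
    _ ≤ l.sum := sum_take_le_of_sublist hsub (m.pairwise_sort _)
    _ = s.sum := hsum

lemma take_sort_le (m : Multiset ℕ) (j : ℕ) :
    (((m.sort (· ≤ ·)).take j : List ℕ) : Multiset ℕ) ≤ m := by
  have := (List.take_sublist j (m.sort (· ≤ ·))).subperm
  have := Multiset.coe_le.mpr this
  rwa [Multiset.sort_eq] at this

lemma exists_split (s u v : Multiset ℕ) (h : s ≤ u + v) :
    ∃ s₁ s₂, s₁ ≤ u ∧ s₂ ≤ v ∧ s = s₁ + s₂ := by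
  refine ⟨s - (s - u), s - u, tsub_tsub_le, tsub_le_iff_left.mpr h, ?_⟩
  rw [tsub_add_cancel_of_le tsub_le_self]

lemma exists_decomp {ι : Type*} [DecidableEq ι] (F : Finset ι) (m : ι → Multiset ℕ) :
    ∀ s : Multiset ℕ, s ≤ ∑ i ∈ F, m i →
      ∃ f : ι → Multiset ℕ, (∀ i ∈ F, f i ≤ m i) ∧ s = ∑ i ∈ F, f i := by
  induction F using Finset.induction with
  | empty =>
    intro s hs
    simp only [Finset.sum_empty, Multiset.le_zero] at hs
    exact ⟨fun _ => 0, by simp, by simp [hs]⟩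
  | @insert a F ha ih =>
    intro s hs
    rw [Finset.sum_insert ha] at hs
    obtain ⟨s₁, s₂, h₁, h₂, hsplit⟩ := exists_split s _ _ hs
    obtain ⟨f, hf, hfs⟩ := ih s₂ h₂
    refine ⟨fun i => if i = a then s₁ else f i, ?_, ?_⟩
    · intro i hi
      rcases Finset.mem_insert.mp hi with hia | hiF
      · subst hia; simpa
      · have hne : i ≠ a := fun hia => ha (hia ▸ hiF)
        simpa [hne] using hf i hiF
    · rw [Finset.sum_insert ha]
      simp only [if_pos rfl]
      rw [hsplit, hfs]
      congr 1
      exact Finset.sum_congr rfl fun i hi => by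
        have hne : i ≠ a := fun hia => ha (hia ▸ hi)
        simp [hne]

lemma len_pos {d : ℕ} (hd : 0 < d) (lam : Nat.Partition d) : 0 < len lam := by
  rw [len, Multiset.card_pos]
  intro h0
  have := lam.parts_sum
  rw [h0] at this
  simp at this
  omega

lemma len_mu_le {d : ℕ} (hd : 0 < d) (lam mu : Nat.Partition d)
    (h : SuperDominates lam mu) : len mu ≤ len lam := by
  by_contra hlt
  push_neg at hlt
  have h1 : 1 ≤ len lam := len_pos hd lam
  have key := h (len lam) h1 (le_min le_rfl hlt.le)
  -- LHS is d
  have hlam : ((partsAsc lam).take (len lam)).sum = d := by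
    rw [partsAsc, List.take_of_length_le (by rw [Multiset.length_sort]; rfl)]
    rw [← Multiset.sum_coe, Multiset.sort_eq, lam.parts_sum]
  -- RHS is < d
  have hmu : ((partsAsc mu).take (len lam)).sum < d := by
    have hsplit : (partsAsc mu).sum =
        ((partsAsc mu).take (len lam)).sum + ((partsAsc mu).drop (len lam)).sum := by
      rw [← List.sum_append, List.take_append_drop]
    have hsumall : (partsAsc mu).sum = d := by
      rw [partsAsc, ← Multiset.sum_coe, Multiset.sort_eq, mu.parts_sum]
    have hdroplen : (partsAsc mu).drop (len lam) ≠ [] := by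
      rw [← List.length_pos_iff, List.length_drop, partsAsc, Multiset.length_sort]
      exact Nat.sub_pos_of_lt hlt
    have hpos : 0 < ((partsAsc mu).drop (len lam)).sum := by
      obtain ⟨b, hb⟩ := List.exists_mem_of_ne_nil _ hdroplen
      have hbmem : b ∈ partsAsc mu := (List.drop_sublist _ _).mem hb
      have hbparts : b ∈ mu.parts := by
        rwa [partsAsc, Multiset.mem_sort] at hbmem
      have hbpos := mu.parts_pos hbparts
      calc 0 < b := hbpos
        _ ≤ _ := List.single_le_sum (fun _ _ => Nat.zero_le _) _ hb
    omega
  omega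

lemma card_coe_take (m : Multiset ℕ) (j : ℕ) (hj : j ≤ Multiset.card m) :
    Multiset.card (((m.sort (· ≤ ·)).take j : List ℕ) : Multiset ℕ) = j := by
  rw [Multiset.coe_card, List.length_take, Multiset.length_sort]
  omega

lemma sum_coe_take (m : Multiset ℕ) (j : ℕ) :
    (((m.sort (· ≤ ·)).take j : List ℕ) : Multiset ℕ).sum = ((m.sort (· ≤ ·)).take j).sum :=
  Multiset.sum_coe _

lemma card_finset_sum {ι : Type*} (F : Finset ι) (g : ι → Multiset ℕ) :
    Multiset.card (∑ i ∈ F, g i) = ∑ i ∈ F, Multiset.card (g i) := by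
  induction F using Finset.cons_induction with
  | empty => simp
  | cons a F ha ih => rw [Finset.sum_cons, Finset.sum_cons, Multiset.card_add, ih]

lemma sum_finset_sum {ι : Type*} (F : Finset ι) (g : ι → Multiset ℕ) :
    Multiset.sum (∑ i ∈ F, g i) = ∑ i ∈ F, (g i).sum := by
  induction F using Finset.cons_induction with
  | empty => simp
  | cons a F ha ih => rw [Finset.sum_cons, Finset.sum_cons, Multiset.sum_add, ih]

/-- If `λ^i ⪰ μ^i` for partitions of the same numbers `d_i`,
`i = 1, …, k` (`k ≥ 2`), then the fusion `λ^1⋯λ^k` superdominates the fusion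
`μ^1⋯μ^k`.  (The fusion is the partition whose multiset of parts is the disjoint
union of the multisets of parts of the factors.) -/
theorem fusion_superDominates {k : ℕ} (hk : 2 ≤ k) (d : Fin k → ℕ) (hd : ∀ i, 0 < d i)
    (lam mu : ∀ i : Fin k, Nat.Partition (d i))
    (h : ∀ i, SuperDominates (lam i) (mu i))
    (Lam Mu : Nat.Partition (∑ i, d i))
    (hLam : Lam.parts = ∑ i, (lam i).parts)
    (hMu : Mu.parts = ∑ i, (mu i).parts) :
    SuperDominates Lam Mu := by
  intro j hj1 hj
  have hlen : ∀ i, len (mu i) ≤ len (lam i) := fun i => len_mu_le (hd i) _ _ (h i)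
  have hjMu : j ≤ Multiset.card Mu.parts := le_trans hj (min_le_right _ _)
  -- decompose the smallest-j submultiset of Mu
  set s : Multiset ℕ := (((Mu.parts.sort (· ≤ ·)).take j : List ℕ) : Multiset ℕ) with hs
  have hsle : s ≤ Mu.parts := take_sort_le _ _
  have hscard : Multiset.card s = j := card_coe_take _ _ hjMu
  rw [hMu] at hsle
  obtain ⟨f, hf, hfs⟩ := exists_decomp Finset.univ (fun i => (mu i).parts) s hsle
  have hfle : ∀ i, f i ≤ (mu i).parts := fun i => hf i (Finset.mem_univ i)
  have hfcard : ∀ i, Multiset.card (f i) ≤ len (mu i) :=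
    fun i => Multiset.card_le_card (hfle i)
  have hcardsum : ∑ i, Multiset.card (f i) = j := by
    rw [← hscard, hfs, card_finset_sum]
  -- Mu side: sum of j smallest of Mu = ∑ (f i).sum ≥ ∑ smallest card(f i) of mu i
  have hMuSum : ((partsAsc Mu).take j).sum = ∑ i, (f i).sum := by
    rw [partsAsc, ← sum_coe_take, ← hs, hfs, sum_finset_sum]
  -- per-component chain
  have hcomp : ∀ i, (((lam i).parts.sort (· ≤ ·)).take (Multiset.card (f i))).sum
      ≤ (f i).sum := by
    intro i
    have h1 : (((mu i).parts.sort (· ≤ ·)).take (Multiset.card (f i))).sum ≤ (f i).sum :=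
      sum_take_sort_le _ _ (hfle i)
    rcases Nat.eq_zero_or_pos (Multiset.card (f i)) with h0 | hp
    · simp [h0]
    · have h2 := h i (Multiset.card (f i)) hp
        (le_min (le_trans (hfcard i) (hlen i)) (hfcard i))
      rw [partsAsc, partsAsc] at h2
      omega
  -- Lam side: build the union of smallest card(f i) of lam i
  set t : Multiset ℕ :=
    ∑ i, ((((lam i).parts.sort (· ≤ ·)).take (Multiset.card (f i)) : List ℕ) : Multiset ℕ)
    with ht
  have htle : t ≤ Lam.parts := by
    rw [hLam]
    exact Finset.sum_le_sum fun i _ => take_sort_le _ _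
  have htcard : Multiset.card t = j := by
    rw [ht, card_finset_sum, ← hcardsum]
    exact Finset.sum_congr rfl fun i _ =>
      card_coe_take (lam i).parts (Multiset.card (f i))
        (le_trans (hfcard i) (hlen i))
  have htsum : t.sum =
      ∑ i, (((lam i).parts.sort (· ≤ ·)).take (Multiset.card (f i))).sum := by
    rw [ht, sum_finset_sum]
    exact Finset.sum_congr rfl fun i _ => sum_coe_take _ _
  have hLamSum : ((partsAsc Lam).take j).sum ≤ t.sum := by
    rw [partsAsc, ← htcard]
    exact sum_take_sort_le _ _ htle
  calc ((partsAsc Lam).take j).sum ≤ t.sum := hLamSum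
    _ = ∑ i, (((lam i).parts.sort (· ≤ ·)).take (Multiset.card (f i))).sum := htsum
    _ ≤ ∑ i, (f i).sum := Finset.sum_le_sum fun i _ => hcomp i
    _ = ((partsAsc Mu).take j).sum := hMuSum.symm
end

section
/- Let λ and μ be partitions of the same positive integer d and let ν be any partition (of any positive integer). Then λ ⪰ μ if and only if λν ⪰ μν, where λν and μν are the fusions (partitions of d + |ν|). -/
open scoped BigOperators

/-- The fusion of two partitions: the partition whose multiset of parts is the
disjoint union of the multisets of parts. -/
def fuse {a b : ℕ} (lam : Nat.Partition a) (nu : Nat.Partition b) :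
    Nat.Partition (a + b) where
  parts := lam.parts + nu.parts
  parts_pos := by
    intro i hi
    rcases Multiset.mem_add.mp hi with h | h
    · exact lam.parts_pos h
    · exact nu.parts_pos h
  parts_sum := by rw [Multiset.sum_add, lam.parts_sum, nu.parts_sum]

/-! ### Auxiliary definitions and lemmas -/

/-- Sum of the `j` smallest elements of a multiset. -/
def Fsum (S : Multiset ℕ) (j : ℕ) : ℕ :=
  ((S.sort (· ≤ ·)).take j).sum

/-- Superdominance at the level of multisets. -/
def SD (S T : Multiset ℕ) : Prop :=
  ∀ j : ℕ, 1 ≤ j → j ≤ min (Multiset.card S) (Multiset.card T) →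
    Fsum S j ≤ Fsum T j

lemma sort_cons_eq (t : ℕ) (S : Multiset ℕ) :
    (t ::ₘ S).sort (· ≤ ·) = List.orderedInsert (· ≤ ·) t (S.sort (· ≤ ·)) := by
  have h1 : (List.orderedInsert (· ≤ ·) t (S.sort (· ≤ ·)) : Multiset ℕ) = t ::ₘ S := by
    have hp := List.perm_orderedInsert (· ≤ ·) t (S.sort (· ≤ ·))
    calc (List.orderedInsert (· ≤ ·) t (S.sort (· ≤ ·)) : Multiset ℕ)
        = (↑(t :: S.sort (· ≤ ·)) : Multiset ℕ) := Multiset.coe_eq_coe.mpr hp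
      _ = t ::ₘ (↑(S.sort (· ≤ ·)) : Multiset ℕ) := rfl
      _ = t ::ₘ S := by rw [Multiset.sort_eq]
  have hperm : List.Perm ((t ::ₘ S).sort (· ≤ ·)) (List.orderedInsert (· ≤ ·) t (S.sort (· ≤ ·))) := by
    apply Multiset.coe_eq_coe.mp
    rw [Multiset.sort_eq, h1]
  exact List.Perm.eq_of_pairwise' (Multiset.pairwise_sort _ _)
    ((Multiset.pairwise_sort S _).orderedInsert t _) hperm

section ListLemmas

variable (t : ℕ) (l : List ℕ)

/-- Number of entries of `l` strictly below `t` (for sorted `l`). -/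
def cntLt : ℕ := (l.takeWhile fun b => ¬ t ≤ b).length

lemma takeWhile_eq_take' : (l.takeWhile fun b => ¬ t ≤ b) = l.take (cntLt t l) :=
  List.prefix_iff_eq_take.mp (List.takeWhile_prefix _)

lemma cntLt_le_length : cntLt t l ≤ l.length := by
  have := (List.takeWhile_prefix (l := l) (fun b => ¬ t ≤ b)).length_le
  exact this

/-- (C-eq) For `j ≤ cntLt`, the `j` smallest elements are unchanged by inserting `t`. -/
lemma take_orderedInsert_of_le (j : ℕ) (hj : j ≤ cntLt t l) :
    (List.orderedInsert (· ≤ ·) t l).take j = l.take j := by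
  rw [List.orderedInsert_eq_take_drop, List.take_append]
  have h0 : j - (l.takeWhile fun b => ¬ t ≤ b).length = 0 := by
    have : j ≤ (l.takeWhile fun b => ¬ t ≤ b).length := hj
    omega
  rw [h0, List.take_zero, List.append_nil, takeWhile_eq_take', List.take_take,
    min_eq_left hj]

/-- (B-eq) For `j > cntLt`, the sum of the `j` smallest after inserting `t` is
the sum of the `j-1` smallest plus `t`. -/
lemma sum_take_orderedInsert_of_gt (j : ℕ) (hj : cntLt t l < j) :
    ((List.orderedInsert (· ≤ ·) t l).take j).sum = (l.take (j - 1)).sum + t := by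
  set p := cntLt t l with hp
  rw [List.orderedInsert_eq_take_drop, List.take_append]
  have hTW : (l.takeWhile fun b => ¬ t ≤ b).length = p := rfl
  have htake : (l.takeWhile fun b => ¬ t ≤ b).take j = l.takeWhile fun b => ¬ t ≤ b := by
    apply List.take_of_length_le; omega
  rw [htake, hTW]
  have hjp : j - p = (j - p - 1) + 1 := by omega
  rw [hjp, List.take_succ_cons]
  have hl : l = (l.takeWhile fun b => ¬ t ≤ b) ++ (l.dropWhile fun b => ¬ t ≤ b) :=
    (List.takeWhile_append_dropWhile (l := l)).symm
  conv_rhs => rw [hl]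
  rw [List.take_append]
  have htake2 : (l.takeWhile fun b => ¬ t ≤ b).take (j - 1) =
      l.takeWhile fun b => ¬ t ≤ b := by
    apply List.take_of_length_le; omega
  rw [htake2, hTW]
  have : j - 1 - p = j - p - 1 := by omega
  rw [this]
  simp [List.sum_append]
  omega

/-- If `j - 1 < cntLt`, then the `j`-th smallest element of `l` is `< t`. -/
lemma getElem_lt_of_lt_cnt (j : ℕ) (hj : j < cntLt t l) (hl : j < l.length) :
    l[j] < t := by
  have hmem : l[j] ∈ l.takeWhile fun b => ¬ t ≤ b := by
    rw [takeWhile_eq_take' t l]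
    have hlen : j < (l.take (cntLt t l)).length := by
      rw [List.length_take]; omega
    have : (l.take (cntLt t l))[j] = l[j] := List.getElem_take ..
    rw [← this]
    exact List.getElem_mem hlen
  have := List.mem_takeWhile_imp hmem
  simp only [decide_not, Bool.not_eq_true', decide_eq_false_iff_not, not_le] at this
  simpa using this

/-- (B-ineq) -/
lemma sum_take_orderedInsert_le_shift (j : ℕ) (hj : 1 ≤ j) :
    ((List.orderedInsert (· ≤ ·) t l).take j).sum ≤ (l.take (j - 1)).sum + t := by
  rcases le_or_gt j (cntLt t l) with h | h
  · rw [take_orderedInsert_of_le t l j h]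
    have hlt : j - 1 < l.length := by
      have := cntLt_le_length t l; omega
    have hsum : (l.take ((j - 1) + 1)).sum = (l.take (j - 1)).sum + l[j - 1] :=
      List.sum_take_succ l (j - 1) hlt
    have hj1 : (j - 1) + 1 = j := by omega
    rw [hj1] at hsum
    rw [hsum]
    have : l[j - 1] < t := getElem_lt_of_lt_cnt t l (j - 1) (by omega) hlt
    omega
  · rw [sum_take_orderedInsert_of_gt t l j h]

/-- For sorted `l`, entries at positions `≥ cntLt` are `≥ t`. -/
lemma le_getElem_of_cnt_le (hs : l.Pairwise (· ≤ ·)) (j : ℕ) (hj : cntLt t l ≤ j)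
    (hl : j < l.length) : t ≤ l[j] := by
  set p := cntLt t l with hp
  have hplen : p < l.length := lt_of_le_of_lt hj hl
  have h3 : (l.takeWhile fun b => ¬ t ≤ b) = l.take p := takeWhile_eq_take' t l
  have hdw : (l.dropWhile fun b => ¬ t ≤ b) = l.drop p := by
    have h4 := List.takeWhile_append_dropWhile (p := fun b => decide (¬ t ≤ b)) (l := l)
    rw [h3] at h4
    exact List.append_cancel_left (h4.trans (List.take_append_drop p l).symm)
  have hne : (l.dropWhile fun b => ¬ t ≤ b) ≠ [] := by
    rw [hdw]
    simp only [ne_eq, List.drop_eq_nil_iff]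
    omega
  have hheadelem : (l.dropWhile fun b => ¬ t ≤ b).head hne = l[p] := by
    rw [List.head_eq_getElem, List.getElem_of_eq hdw]
    simp
  have hhead := List.head_dropWhile_not (fun b => decide (¬ t ≤ b)) hne
  rw [hheadelem] at hhead
  simp at hhead
  have hmono : l[p] ≤ l[j] := by
    rcases eq_or_lt_of_le hj with rfl | hlt
    · exact le_refl _
    · exact List.pairwise_iff_getElem.mp hs p j hplen hl hlt
  exact le_trans hhead hmono

/-- (A-ineq) -/
lemma sum_take_orderedInsert_le (hs : l.Pairwise (· ≤ ·)) (j : ℕ) (hj : j ≤ l.length) :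
    ((List.orderedInsert (· ≤ ·) t l).take j).sum ≤ (l.take j).sum := by
  rcases le_or_gt j (cntLt t l) with h | h
  · rw [take_orderedInsert_of_le t l j h]
  · rw [sum_take_orderedInsert_of_gt t l j h]
    have hlt : j - 1 < l.length := by omega
    have hsum : (l.take ((j - 1) + 1)).sum = (l.take (j - 1)).sum + l[j - 1] :=
      List.sum_take_succ l (j - 1) hlt
    have hj1 : (j - 1) + 1 = j := by omega
    rw [hj1] at hsum
    rw [hsum]
    have : t ≤ l[j - 1] := le_getElem_of_cnt_le t l hs (j - 1) (by omega) hlt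
    omega

end ListLemmas

/-! ### Multiset-level lemmas -/

lemma Fsum_cons_le (t : ℕ) (S : Multiset ℕ) (j : ℕ) (hj : j ≤ Multiset.card S) :
    Fsum (t ::ₘ S) j ≤ Fsum S j := by
  unfold Fsum
  rw [sort_cons_eq]
  exact sum_take_orderedInsert_le t _ (Multiset.pairwise_sort S _) j
    (by rw [Multiset.length_sort]; exact hj)

lemma Fsum_cons_le_shift (t : ℕ) (S : Multiset ℕ) (j : ℕ) (hj : 1 ≤ j) :
    Fsum (t ::ₘ S) j ≤ Fsum S (j - 1) + t := by
  unfold Fsum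
  rw [sort_cons_eq]
  exact sum_take_orderedInsert_le_shift t _ j hj

lemma card_le_of_SD (S T : Multiset ℕ) (hsum : S.sum = T.sum)
    (hT : ∀ x ∈ T, 0 < x) (h : SD S T) : Multiset.card T ≤ Multiset.card S := by
  by_contra hc
  push_neg at hc
  rcases Nat.eq_zero_or_pos (Multiset.card S) with h0 | h0
  · have hS : S = 0 := Multiset.card_eq_zero.mp h0
    have hT0 : T.sum = 0 := by rw [← hsum, hS]; simp
    obtain ⟨x, hx⟩ := Multiset.card_pos_iff_exists_mem.mp (by omega : 0 < Multiset.card T)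
    have := hT x hx
    have : x = 0 := by
      have := Multiset.sum_eq_zero_iff.mp hT0 x hx
      exact this
    omega
  · set n := Multiset.card S with hn
    have hle := h n h0 (by omega)
    have hFS : Fsum S n = S.sum := by
      unfold Fsum
      rw [List.take_of_length_le (by rw [Multiset.length_sort])]
      rw [← Multiset.sum_coe, Multiset.sort_eq]
    have hFT : Fsum T n < T.sum := by
      unfold Fsum
      have hsplit : ((T.sort (· ≤ ·)).take n).sum + ((T.sort (· ≤ ·)).drop n).sum
          = (T.sort (· ≤ ·)).sum := List.sum_take_add_sum_drop _ _
      have hTsum : (T.sort (· ≤ ·)).sum = T.sum := by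
        rw [← Multiset.sum_coe, Multiset.sort_eq]
      have hne : (T.sort (· ≤ ·)).drop n ≠ [] := by
        simp only [ne_eq, List.drop_eq_nil_iff, Multiset.length_sort]
        omega
      have hpos : 0 < ((T.sort (· ≤ ·)).drop n).sum := by
        obtain ⟨x, hx⟩ := List.exists_mem_of_ne_nil _ hne
        have hxT : x ∈ T := by
          have : x ∈ T.sort (· ≤ ·) := List.mem_of_mem_drop hx
          rwa [Multiset.mem_sort] at this
        have hx0 := hT x hxT
        calc 0 < x := hx0
          _ ≤ ((T.sort (· ≤ ·)).drop n).sum := List.single_le_sum (fun _ _ => Nat.zero_le _) x hx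
      omega
    rw [hFS] at hle
    omega

/-- Forward direction for a single extra part. -/
lemma SD_cons_of_SD (t : ℕ) (S T : Multiset ℕ) (hlen : Multiset.card T ≤ Multiset.card S)
    (h : SD S T) : SD (t ::ₘ S) (t ::ₘ T) := by
  intro j hj1 hj2
  simp only [Multiset.card_cons] at hj2
  set lT := T.sort (· ≤ ·) with hlT
  rcases le_or_gt j (cntLt t lT) with hcase | hcase
  · -- the j smallest of t ::ₘ T are the j smallest of T
    have hFT : Fsum (t ::ₘ T) j = Fsum T j := by
      unfold Fsum
      rw [sort_cons_eq, take_orderedInsert_of_le t lT j hcase]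
    have hjT : j ≤ Multiset.card T := by
      have := cntLt_le_length t lT
      rw [Multiset.length_sort] at this
      omega
    have h1 : Fsum (t ::ₘ S) j ≤ Fsum S j := Fsum_cons_le t S j (by omega)
    have h2 : Fsum S j ≤ Fsum T j := h j hj1 (by omega)
    omega
  · have hFT : Fsum (t ::ₘ T) j = Fsum T (j - 1) + t := by
      unfold Fsum
      rw [sort_cons_eq]
      exact sum_take_orderedInsert_of_gt t lT j hcase
    have h1 : Fsum (t ::ₘ S) j ≤ Fsum S (j - 1) + t := Fsum_cons_le_shift t S j hj1
    have h2 : Fsum S (j - 1) ≤ Fsum T (j - 1) := by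
      rcases Nat.eq_zero_or_pos (j - 1) with h0 | h0
      · rw [h0]; simp [Fsum]
      · exact h (j - 1) h0 (by omega)
    omega

/-- Backward direction for a single extra part. -/
lemma SD_of_SD_cons (t : ℕ) (S T : Multiset ℕ)
    (h : SD (t ::ₘ S) (t ::ₘ T)) : SD S T := by
  intro j hj1 hj2
  set lS := S.sort (· ≤ ·) with hlS
  have hjS : j ≤ Multiset.card S := by omega
  have hjT : j ≤ Multiset.card T := by omega
  rcases le_or_gt j (cntLt t lS) with hcase | hcase
  · have hFS : Fsum (t ::ₘ S) j = Fsum S j := by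
      unfold Fsum
      rw [sort_cons_eq, take_orderedInsert_of_le t lS j hcase]
    have h1 : Fsum (t ::ₘ S) j ≤ Fsum (t ::ₘ T) j := by
      apply h j hj1
      simp only [Multiset.card_cons]
      omega
    have h2 : Fsum (t ::ₘ T) j ≤ Fsum T j := Fsum_cons_le t T j hjT
    omega
  · have hFS : Fsum (t ::ₘ S) (j + 1) = Fsum S j + t := by
      unfold Fsum
      rw [sort_cons_eq]
      have := sum_take_orderedInsert_of_gt t lS (j + 1) (by omega)
      simpa using this
    have h1 : Fsum (t ::ₘ S) (j + 1) ≤ Fsum (t ::ₘ T) (j + 1) := by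
      apply h (j + 1) (by omega)
      simp only [Multiset.card_cons]
      omega
    have h2 : Fsum (t ::ₘ T) (j + 1) ≤ Fsum T j + t := by
      have := Fsum_cons_le_shift t T (j + 1) (by omega)
      simpa using this
    omega

lemma SD_add_iff (S T : Multiset ℕ) (hsum : S.sum = T.sum) (hT : ∀ x ∈ T, 0 < x) :
    ∀ U : Multiset ℕ, (∀ x ∈ U, 0 < x) → (SD S T ↔ SD (S + U) (T + U)) := by
  intro U
  induction U using Multiset.induction_on with
  | empty => intro _; simp
  | cons t U' IH =>
    intro hU
    have hU' : ∀ x ∈ U', 0 < x := fun x hx => hU x (Multiset.mem_cons_of_mem hx)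
    have IH' := IH hU'
    have hsum' : (S + U').sum = (T + U').sum := by
      rw [Multiset.sum_add, Multiset.sum_add, hsum]
    have hTpos' : ∀ x ∈ T + U', 0 < x := by
      intro x hx
      rcases Multiset.mem_add.mp hx with h | h
      · exact hT x h
      · exact hU' x h
    have key : SD (S + U') (T + U') ↔ SD (t ::ₘ (S + U')) (t ::ₘ (T + U')) := by
      constructor
      · intro hSD
        exact SD_cons_of_SD t _ _ (card_le_of_SD _ _ hsum' hTpos' hSD) hSD
      · exact SD_of_SD_cons t _ _
    rw [IH', key, ← Multiset.add_cons, ← Multiset.add_cons]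

/-- For partitions `λ, μ` of the same positive integer `d` and any
partition `ν` (of a positive integer `e`), `λ ⪰ μ` iff `λν ⪰ μν`. -/
theorem superDominates_iff_fuse {d e : ℕ} (hd : 0 < d) (he : 0 < e)
    (lam mu : Nat.Partition d) (nu : Nat.Partition e) :
    SuperDominates lam mu ↔ SuperDominates (fuse lam nu) (fuse mu nu) := by
  have hsum : lam.parts.sum = mu.parts.sum := by
    rw [lam.parts_sum, mu.parts_sum]
  have hT : ∀ x ∈ mu.parts, 0 < x := fun x hx => mu.parts_pos hx
  have hU : ∀ x ∈ nu.parts, 0 < x := fun x hx => nu.parts_pos hx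
  exact SD_add_iff lam.parts mu.parts hsum hT nu.parts hU
end

section
/- Let λ and μ be even partitions of 2d with λ ⪰ μ in the superdominance order. Then for every positive integer n, the polynomial p_λ − p_μ ∈ ℝ[X_1, …, X_n] is a sum of squares. -/
open scoped BigOperators

/-- The power sum polynomial `p_r = X_1^r + ⋯ + X_n^r`. -/
noncomputable def psumPoly (n r : ℕ) : MvPolynomial (Fin n) ℝ :=
  ∑ i : Fin n, MvPolynomial.X i ^ r

/-- The polynomial `p_λ = Π_i p_{λ_i}` in `ℝ[X_1, …, X_n]`. -/
noncomputable def ppoly (n : ℕ) {d : ℕ} (lam : Nat.Partition d) :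
    MvPolynomial (Fin n) ℝ :=
  (lam.parts.map fun r => psumPoly n r).prod

/-- `f` is a sum of squares of polynomials. -/
def IsSOS {n : ℕ} (f : MvPolynomial (Fin n) ℝ) : Prop :=
  ∃ (m : ℕ) (q : Fin m → MvPolynomial (Fin n) ℝ), f = ∑ i, q i ^ 2

/-! ### Generalities on sums of squares -/

section SOSalg
variable {R : Type*} [CommRing R]

lemma isSumSq_sq_mul {x : R} {b : R} (hb : IsSumSq b) : IsSumSq (x * x * b) := by
  induction hb with
  | zero => simpa using IsSumSq.zero
  | @sq_add y S hS ih =>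
      have : x * x * (y * y + S) = (x * y) * (x * y) + x * x * S := by ring
      rw [this]; exact IsSumSq.sq_add _ ih

lemma IsSumSq.mul' {a b : R} (ha : IsSumSq a) (hb : IsSumSq b) : IsSumSq (a * b) := by
  induction ha with
  | zero => simpa using IsSumSq.zero
  | @sq_add x S hS ih =>
      have : (x * x + S) * b = x * x * b + S * b := by ring
      rw [this]; exact (isSumSq_sq_mul hb).add ih

lemma isSumSq_sq (x : R) : IsSumSq (x ^ 2) := by
  have : x ^ 2 = x * x + 0 := by ring
  rw [this]; exact IsSumSq.sq_add _ IsSumSq.zero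

lemma isSumSq_one : IsSumSq (1 : R) := by
  simpa using isSumSq_sq (1 : R)

lemma isSumSq_sum {ι : Type*} (s : Finset ι) (f : ι → R) (h : ∀ i ∈ s, IsSumSq (f i)) :
    IsSumSq (∑ i ∈ s, f i) := by
  induction s using Finset.cons_induction with
  | empty => simpa using IsSumSq.zero
  | cons i s his ih =>
      rw [Finset.sum_cons]
      exact (h i (Finset.mem_cons_self _ _)).add (ih fun j hj => h j (Finset.mem_cons_of_mem hj))

end SOSalg

lemma isSOS_of_isSumSq {n : ℕ} {f : MvPolynomial (Fin n) ℝ} (h : IsSumSq f) : IsSOS f := by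
  induction h with
  | zero => exact ⟨0, ![], by simp⟩
  | @sq_add a S hS ih =>
      obtain ⟨m, q, rfl⟩ := ih
      refine ⟨m + 1, Fin.cons (a) q, ?_⟩
      simp [Fin.sum_univ_succ, sq]

lemma isSumSq_psum_even (n : ℕ) {r : ℕ} (hr : Even r) : IsSumSq (psumPoly n r) := by
  obtain ⟨t, rfl⟩ := hr
  have : psumPoly n (t + t) = ∑ i : Fin n, (MvPolynomial.X i ^ t) * (MvPolynomial.X i ^ t) := by
    unfold psumPoly
    refine Finset.sum_congr rfl fun i _ => ?_
    rw [← pow_add]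
  rw [this]
  exact IsSumSq.sum_mul_self _ _

/-! ### Merge and transfer inequalities for power sums -/

section MergeTransfer
open MvPolynomial Finset

lemma psum_mul_psum (n a b : ℕ) :
    psumPoly n a * psumPoly n b
      = psumPoly n (a + b) + ∑ p ∈ (univ : Finset (Fin n)).offDiag, X p.1 ^ a * X p.2 ^ b := by
  unfold psumPoly
  rw [Finset.sum_mul_sum]
  have h1 : ∑ i : Fin n, ∑ j : Fin n, (X i ^ a * X j ^ b : MvPolynomial (Fin n) ℝ)
      = ∑ p ∈ (univ ×ˢ univ : Finset (Fin n × Fin n)), X p.1 ^ a * X p.2 ^ b := by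
    rw [Finset.sum_product]
  rw [h1, ← Finset.diag_union_offDiag, Finset.sum_union (Finset.disjoint_diag_offDiag _)]
  congr 1
  rw [Finset.sum_diag]
  exact Finset.sum_congr rfl fun i _ => by rw [← pow_add]

lemma sum_offDiag_eq_pairs {n : ℕ} {R : Type*} [AddCommMonoid R] (f : Fin n → Fin n → R) :
    ∑ p ∈ (univ : Finset (Fin n)).offDiag, f p.1 p.2
      = ∑ p ∈ univ.filter (fun p : Fin n × Fin n => p.1 < p.2), (f p.1 p.2 + f p.2 p.1) := by
  rw [← Finset.sum_filter_add_sum_filter_not ((univ : Finset (Fin n)).offDiag)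
    (fun p => p.1 < p.2)]
  have hA : (univ : Finset (Fin n)).offDiag.filter (fun p => p.1 < p.2)
      = univ.filter (fun p : Fin n × Fin n => p.1 < p.2) := by
    ext p
    simp only [Finset.mem_filter, Finset.mem_offDiag, Finset.mem_univ, true_and]
    exact ⟨fun h => h.2, fun h => ⟨ne_of_lt h, h⟩⟩
  have hB : (univ : Finset (Fin n)).offDiag.filter (fun p => ¬ p.1 < p.2)
      = univ.filter (fun p : Fin n × Fin n => p.2 < p.1) := by
    ext p
    simp only [Finset.mem_filter, Finset.mem_offDiag, Finset.mem_univ, true_and, not_lt]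
    constructor
    · rintro ⟨hne, hle⟩; exact lt_of_le_of_ne hle (fun h => hne h.symm)
    · intro h; exact ⟨(ne_of_lt h).symm, le_of_lt h⟩
  rw [hA, hB]
  rw [Finset.sum_add_distrib]
  congr 1
  refine Finset.sum_nbij' (fun p => (p.2, p.1)) (fun p => (p.2, p.1)) ?_ ?_ ?_ ?_ ?_ <;>
    simp

lemma transfer_sos (n : ℕ) {a b a' b' : ℕ} (hab : a + b = a' + b')
    (h1 : a ≤ a') (h2 : a' ≤ b') (h3 : b' ≤ b)
    (hae : Even a) (ha'e : Even a') (hb'e : Even b') :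
    IsSumSq (psumPoly n a * psumPoly n b - psumPoly n a' * psumPoly n b') := by
  rcases eq_or_lt_of_le h1 with rfl | hlt
  · have hbb : b = b' := by omega
    subst hbb
    simpa using (IsSumSq.zero : IsSumSq (0 : MvPolynomial (Fin n) ℝ))
  · obtain ⟨α, hα⟩ := hae
    obtain ⟨γ, hγ⟩ := ha'e
    obtain ⟨δ, hδ⟩ := hb'e
    obtain ⟨σ, hσ⟩ : ∃ σ, a' = a + (σ + σ) := ⟨γ - α, by omega⟩
    obtain ⟨τ, hτ⟩ : ∃ τ, b' = a + (τ + τ) := ⟨δ - α, by omega⟩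
    have hbeq : b = a + (σ + σ) + (τ + τ) := by omega
    have key : psumPoly n a * psumPoly n b - psumPoly n a' * psumPoly n b'
        = ∑ p ∈ (univ : Finset (Fin n)).offDiag,
            (X p.1 ^ a * X p.2 ^ b - X p.1 ^ a' * X p.2 ^ b') := by
      rw [psum_mul_psum, psum_mul_psum, hab, Finset.sum_sub_distrib]
      ring
    rw [key, sum_offDiag_eq_pairs
      (f := fun i j => (X i ^ a * X j ^ b - X i ^ a' * X j ^ b' : MvPolynomial (Fin n) ℝ))]
    refine isSumSq_sum _ _ fun p _ => ?_
    set x := (X p.1 : MvPolynomial (Fin n) ℝ)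
    set y := (X p.2 : MvPolynomial (Fin n) ℝ)
    have g1 := geom_sum₂_mul (x ^ 2) (y ^ 2) σ
    have g2 := geom_sum₂_mul (x ^ 2) (y ^ 2) τ
    set S1 := ∑ i ∈ range σ, (x ^ 2) ^ i * (y ^ 2) ^ (σ - 1 - i) with hS1
    set S2 := ∑ i ∈ range τ, (x ^ 2) ^ i * (y ^ 2) ^ (τ - 1 - i) with hS2
    have hterm : (x ^ a * y ^ b - x ^ a' * y ^ b') + (y ^ a * x ^ b - y ^ a' * x ^ b')
        = (x ^ α * y ^ α * (x ^ 2 - y ^ 2)) ^ 2 * (S1 * S2) := by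
      have expand : (x ^ α * y ^ α * (x ^ 2 - y ^ 2)) ^ 2 * (S1 * S2)
          = (x ^ α) ^ 2 * (y ^ α) ^ 2 * ((S1 * (x ^ 2 - y ^ 2)) * (S2 * (x ^ 2 - y ^ 2))) := by
        ring
      rw [expand, g1, g2, hα, hσ, hτ, hbeq, hα]
      ring
    have hgoal : (x ^ a * y ^ b - x ^ a' * y ^ b') + (x ^ b * y ^ a - x ^ b' * y ^ a')
        = (x ^ α * y ^ α * (x ^ 2 - y ^ 2)) ^ 2 * (S1 * S2) := by
      rw [← hterm]; ring
    rw [show (x ^ a * y ^ b - x ^ a' * y ^ b') + (y ^ a * x ^ b - y ^ a' * x ^ b')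
        = (x ^ a * y ^ b - x ^ a' * y ^ b') + (x ^ b * y ^ a - x ^ b' * y ^ a') by ring, hgoal]
    have hSOS1 : IsSumSq S1 := by
      rw [hS1]
      have : ∀ i ∈ range σ, (x ^ 2) ^ i * (y ^ 2) ^ (σ - 1 - i)
          = (x ^ i * y ^ (σ - 1 - i)) * (x ^ i * y ^ (σ - 1 - i)) := by
        intro i _; ring
      rw [Finset.sum_congr rfl this]
      exact IsSumSq.sum_mul_self _ _
    have hSOS2 : IsSumSq S2 := by
      rw [hS2]
      have : ∀ i ∈ range τ, (x ^ 2) ^ i * (y ^ 2) ^ (τ - 1 - i)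
          = (x ^ i * y ^ (τ - 1 - i)) * (x ^ i * y ^ (τ - 1 - i)) := by
        intro i _; ring
      rw [Finset.sum_congr rfl this]
      exact IsSumSq.sum_mul_self _ _
    exact (isSumSq_sq _).mul' (hSOS1.mul' hSOS2)

lemma merge_sos (n : ℕ) {a b : ℕ} (ha : Even a) (hb : Even b) :
    IsSumSq (psumPoly n a * psumPoly n b - psumPoly n (a + b)) := by
  obtain ⟨α, hα⟩ := ha
  obtain ⟨β, hβ⟩ := hb
  rw [psum_mul_psum, add_sub_cancel_left]
  refine isSumSq_sum _ _ fun p _ => ?_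
  have : (X p.1 ^ a * X p.2 ^ b : MvPolynomial (Fin n) ℝ)
      = (X p.1 ^ α * X p.2 ^ β) * (X p.1 ^ α * X p.2 ^ β) + 0 := by
    rw [hα, hβ]; ring
  rw [this]
  exact IsSumSq.sq_add _ IsSumSq.zero

end MergeTransfer
/-! ### List and multiset plumbing -/

/-- Setting an entry of a list, viewed as a multiset. -/
lemma coe_set_eq {α : Type*} [DecidableEq α] (l : List α) (i : ℕ) (x : α) (h : i < l.length) :
    (↑(l.set i x) : Multiset α) = x ::ₘ (↑l : Multiset α).erase l[i] := by
  induction l generalizing i with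
  | nil => simp at h
  | cons hd tl ih =>
      cases i with
      | zero =>
          simp [Multiset.erase_cons_head]
      | succ i =>
          have hi : i < tl.length := by simpa using h
          have : (hd :: tl).set (i+1) x = hd :: tl.set i x := rfl
          rw [this]
          have hgl : (hd :: tl)[i+1] = tl[i] := by simp
          rw [hgl]
          by_cases hh : tl[i] = hd
          · have h1 : (↑(hd :: tl.set i x) : Multiset α) = hd ::ₘ ↑(tl.set i x) := by
              simp
            rw [h1, ih i hi]
            have h2 : (↑(hd :: tl) : Multiset α).erase tl[i] = (↑tl : Multiset α) := by
              have : (↑(hd :: tl) : Multiset α) = hd ::ₘ ↑tl := by simp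
              rw [this, hh, Multiset.erase_cons_head]
            rw [h2]
            rw [Multiset.cons_swap]
            congr 1
            rw [hh]
            exact Multiset.cons_erase (by rw [← hh]; exact List.getElem_mem hi)
          · have h1 : (↑(hd :: tl.set i x) : Multiset α) = hd ::ₘ ↑(tl.set i x) := by simp
            rw [h1, ih i hi]
            have h2 : (↑(hd :: tl) : Multiset α).erase tl[i]
                = hd ::ₘ (↑tl : Multiset α).erase tl[i] := by
              have : (↑(hd :: tl) : Multiset α) = hd ::ₘ ↑tl := by simp
              rw [this, Multiset.erase_cons_tail_of_mem]
              · exact List.getElem_mem hi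
            rw [h2, Multiset.cons_swap]

/-- coe of a list with element i pulled out -/
lemma coe_eq_getElem_cons {α : Type*} [DecidableEq α] (l : List α) (i : ℕ) (h : i < l.length) :
    (↑l : Multiset α) = l[i] ::ₘ (↑l : Multiset α).erase l[i] :=
  (Multiset.cons_erase (by exact List.getElem_mem h)).symm

/-- sum of a prefix as a range sum of `getD`. -/
lemma sum_take_eq_range (l : List ℕ) (m : ℕ) (hm : m ≤ l.length) :
    (l.take m).sum = ∑ i ∈ Finset.range m, l.getD i 0 := by
  induction m with
  | zero => simp
  | succ m ih =>
      have hm' : m ≤ l.length := by omega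
      rw [List.take_succ, List.sum_append, ih hm', Finset.sum_range_succ]
      congr 1
      have hlt : m < l.length := hm
      simp [List.getElem?_eq_getElem hlt, List.getD_eq_getElem l 0 hlt]

lemma sum_eq_range (l : List ℕ) : l.sum = ∑ i ∈ Finset.range l.length, l.getD i 0 := by
  rw [← sum_take_eq_range l l.length le_rfl, List.take_length]

lemma sorted_getD_mono {l : List ℕ} (h : l.Pairwise (·≤·)) {i j : ℕ} (hij : i ≤ j)
    (hj : j < l.length) : l.getD i 0 ≤ l.getD j 0 := by
  have hi : i < l.length := lt_of_le_of_lt hij hj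
  rw [List.getD_eq_getElem l 0 hi, List.getD_eq_getElem l 0 hj]
  rcases eq_or_lt_of_le hij with rfl | hlt
  · exact le_refl _
  · exact List.pairwise_iff_getElem.mp h i j _ _ hlt
/-! ### The product polynomial over a multiset of exponents -/

noncomputable def Pm (n : ℕ) (M : Multiset ℕ) : MvPolynomial (Fin n) ℝ :=
  (M.map fun r => psumPoly n r).prod

lemma Pm_cons (n a : ℕ) (M : Multiset ℕ) : Pm n (a ::ₘ M) = psumPoly n a * Pm n M := by
  simp [Pm]

lemma isSumSq_Pm (n : ℕ) (M : Multiset ℕ) (h : ∀ r ∈ M, Even r) : IsSumSq (Pm n M) := by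
  induction M using Multiset.induction with
  | empty => simpa [Pm] using (isSumSq_one : IsSumSq (1 : MvPolynomial (Fin n) ℝ))
  | cons a M ih =>
      rw [Pm_cons]
      exact (isSumSq_psum_even n (h a (Multiset.mem_cons_self _ _))).mul'
        (ih fun r hr => h r (Multiset.mem_cons_of_mem hr))

lemma step_sos (n : ℕ) (a b a' b' : ℕ) (R : Multiset ℕ) (hR : ∀ r ∈ R, Even r)
    (hpair : IsSumSq (psumPoly n a * psumPoly n b - psumPoly n a' * psumPoly n b')) :
    IsSumSq (Pm n (a ::ₘ b ::ₘ R) - Pm n (a' ::ₘ b' ::ₘ R)) := by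
  rw [Pm_cons, Pm_cons, Pm_cons, Pm_cons]
  have : psumPoly n a * (psumPoly n b * Pm n R) - psumPoly n a' * (psumPoly n b' * Pm n R)
      = (psumPoly n a * psumPoly n b - psumPoly n a' * psumPoly n b') * Pm n R := by ring
  rw [this]
  exact hpair.mul' (isSumSq_Pm n R hR)

lemma merge_step_sos (n : ℕ) (u v : ℕ) (R : Multiset ℕ) (hu : Even u) (hv : Even v)
    (hR : ∀ r ∈ R, Even r) :
    IsSumSq (Pm n (u ::ₘ v ::ₘ R) - Pm n ((u + v) ::ₘ R)) := by
  rw [Pm_cons, Pm_cons, Pm_cons]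
  have : psumPoly n u * (psumPoly n v * Pm n R) - psumPoly n (u + v) * Pm n R
      = (psumPoly n u * psumPoly n v - psumPoly n (u + v)) * Pm n R := by ring
  rw [this]
  exact (merge_sos n hu hv).mul' (isSumSq_Pm n R hR)

/-! ### Measure for the induction -/

lemma sqsum_le (M : Multiset ℕ) : (M.map fun r => r * r).sum ≤ M.sum * M.sum := by
  induction M using Multiset.induction with
  | empty => simp
  | cons a M ih =>
      simp only [Multiset.map_cons, Multiset.sum_cons]
      have : (a + M.sum) * (a + M.sum) = a * a + (2 * a * M.sum + M.sum * M.sum) := by ring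
      omega

lemma sq_transfer_lt {a b : ℕ} (h : a + 4 ≤ b) :
    (a + 2) * (a + 2) + (b - 2) * (b - 2) < a * a + b * b := by
  obtain ⟨e, rfl⟩ : ∃ e, b = a + 4 + e := ⟨b - (a + 4), by omega⟩
  have h1 : a + 4 + e - 2 = a + 2 + e := by omega
  rw [h1]
  nlinarith

def msMeasure (M : Multiset ℕ) : ℕ :=
  Multiset.card M * (M.sum * M.sum + 1) + (M.map fun r => r * r).sum

/-- Superdominance at the level of (sorted) lists, including the trivial index `0`. -/
def SupDomL (A B : List ℕ) : Prop :=
  ∀ j : ℕ, j ≤ min A.length B.length → (A.take j).sum ≤ (B.take j).sum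

/-! ### The main induction -/

lemma main_sos (n : ℕ) : ∀ fuel : ℕ, ∀ M N : Multiset ℕ,
    msMeasure M ≤ fuel →
    (∀ r ∈ M, Even r) → (∀ r ∈ N, Even r) →
    (∀ r ∈ M, 0 < r) → (∀ r ∈ N, 0 < r) →
    M.sum = N.sum →
    SupDomL (M.sort (· ≤ ·)) (N.sort (· ≤ ·)) →
    IsSumSq (Pm n M - Pm n N) := by
  intro fuel
  induction fuel using Nat.strong_induction_on with
  | _ fuel IH =>
  intro M N hfuel hME hNE hMP hNP hsum hdom
  set A := M.sort (· ≤ ·) with hA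
  set B := N.sort (· ≤ ·) with hB
  have hAco : (↑A : Multiset ℕ) = M := Multiset.sort_eq M _
  have hBco : (↑B : Multiset ℕ) = N := Multiset.sort_eq N _
  have hAlen : A.length = Multiset.card M := Multiset.length_sort _
  have hBlen : B.length = Multiset.card N := Multiset.length_sort _
  have hAsort : A.Pairwise (· ≤ ·) := Multiset.pairwise_sort M _
  have hBsort : B.Pairwise (· ≤ ·) := Multiset.pairwise_sort N _
  have hAsum : A.sum = M.sum := by rw [← hAco]; simp
  have hBsum : B.sum = N.sum := by rw [← hBco]; simp
  have hmemA : ∀ r, r ∈ A ↔ r ∈ M := by intro r; rw [← hAco]; simp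
  have hmemB : ∀ r, r ∈ B ↔ r ∈ N := by intro r; rw [← hBco]; simp
  have evenA : ∀ i, i < A.length → Even (A.getD i 0) := by
    intro i hi
    rw [List.getD_eq_getElem A 0 hi]
    exact hME _ ((hmemA _).mp (List.getElem_mem hi))
  have evenB : ∀ i, i < B.length → Even (B.getD i 0) := by
    intro i hi
    rw [List.getD_eq_getElem B 0 hi]
    exact hNE _ ((hmemB _).mp (List.getElem_mem hi))
  rcases lt_trichotomy A.length B.length with hlen | hlen | hlen
  · -- impossible : strictly fewer parts in `M`
    exfalso
    have h1 : (A.take A.length).sum ≤ (B.take A.length).sum :=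
      hdom A.length (by omega)
    rw [List.take_length, hAsum, hsum, ← hBsum] at h1
    have h2 : (B.take A.length).sum + (B.drop A.length).sum = B.sum := by
      rw [← List.sum_append, List.take_append_drop]
    have h3 : (B.drop A.length).sum = 0 := by omega
    have hne : B.drop A.length ≠ [] := by
      intro h
      have := congrArg List.length h
      simp at this
      omega
    obtain ⟨x, hx⟩ := List.exists_mem_of_ne_nil _ hne
    have hxB : x ∈ B := List.mem_of_mem_drop hx
    have : x = 0 := List.sum_eq_zero_iff.mp h3 x hx
    have := hNP x ((hmemB _).mp hxB)
    omega
  · -- equal lengths : transfer case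
    by_cases hABeq : A = B
    · have : M = N := by rw [← hAco, ← hBco, hABeq]
      rw [this, sub_self]
      exact IsSumSq.zero
    · -- transfer case
      have hex : ∃ i, i < A.length ∧ A.getD i 0 ≠ B.getD i 0 := by
        by_contra hc
        push_neg at hc
        apply hABeq
        apply List.ext_getElem hlen
        intro i h1 h2
        have h3 := hc i h1
        rwa [List.getD_eq_getElem A 0 h1, List.getD_eq_getElem B 0 h2] at h3
      obtain ⟨j, hjl, hjne, hjmin⟩ :
          ∃ j, j < A.length ∧ A.getD j 0 ≠ B.getD j 0 ∧
            ∀ i, i < j → A.getD i 0 = B.getD i 0 := by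
        refine ⟨Nat.find hex, (Nat.find_spec hex).1, (Nat.find_spec hex).2, fun i hi => ?_⟩
        by_contra hne
        exact Nat.find_min hex hi ⟨lt_trans hi (Nat.find_spec hex).1, hne⟩
      have hSj : (A.take j).sum = (B.take j).sum := by
        rw [sum_take_eq_range _ _ (by omega), sum_take_eq_range _ _ (by omega)]
        exact Finset.sum_congr rfl fun i hi => hjmin i (Finset.mem_range.mp hi)
      have hSj1 : (A.take (j + 1)).sum ≤ (B.take (j + 1)).sum := hdom (j + 1) (by omega)
      have htsA : (A.take (j + 1)).sum = (A.take j).sum + A.getD j 0 := by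
        rw [sum_take_eq_range _ _ (by omega), sum_take_eq_range _ _ (by omega),
          Finset.sum_range_succ]
      have htsB : (B.take (j + 1)).sum = (B.take j).sum + B.getD j 0 := by
        rw [sum_take_eq_range _ _ (by omega), sum_take_eq_range _ _ (by omega),
          Finset.sum_range_succ]
      have hAjBj : A.getD j 0 < B.getD j 0 := by omega
      have hsumAB : A.sum = B.sum := by rw [hAsum, hBsum, hsum]
      have hexk : ∃ i, i < A.length ∧ B.getD i 0 < A.getD i 0 := by
        by_contra hc
        push_neg at hc
        have hlt : A.sum < B.sum := by
          rw [sum_eq_range, sum_eq_range, ← hlen]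
          exact Finset.sum_lt_sum (fun i hi => hc i (Finset.mem_range.mp hi))
            ⟨j, Finset.mem_range.mpr hjl, hAjBj⟩
        omega
      obtain ⟨k, hkl, hkBA, hkmin⟩ :
          ∃ k, k < A.length ∧ B.getD k 0 < A.getD k 0 ∧
            ∀ i, i < k → i < A.length → A.getD i 0 ≤ B.getD i 0 := by
        refine ⟨Nat.find hexk, (Nat.find_spec hexk).1, (Nat.find_spec hexk).2,
          fun i hik hil => ?_⟩
        by_contra hgt
        exact Nat.find_min hexk hik ⟨hil, by omega⟩
      have hjk : j < k := by
        rcases lt_trichotomy j k with h | h | h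
        · exact h
        · exfalso; rw [h] at hAjBj; omega
        · exfalso; have := hjmin k h; omega
      set a := A.getD j 0 with hadef
      set b := A.getD k 0 with hbdef
      have hae : Even a := evenA j hjl
      have hbe : Even b := evenA k hkl
      have hBje : Even (B.getD j 0) := evenB j (by omega)
      have hBke : Even (B.getD k 0) := evenB k (by omega)
      have hBjk : B.getD j 0 ≤ B.getD k 0 := sorted_getD_mono hBsort (le_of_lt hjk) (by omega)
      have hab4 : a + 4 ≤ b := by
        obtain ⟨a1, ha1⟩ := hae
        obtain ⟨b1, hb1⟩ := hbe
        obtain ⟨c1, hc1⟩ := hBje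
        obtain ⟨d1, hd1⟩ := hBke
        omega
      -- j' : last position carrying the value `a`
      obtain ⟨j', hj'spec, hjj', hj'l, hj'big⟩ :
          ∃ j', A.getD j' 0 = a ∧ j ≤ j' ∧ j' < A.length ∧
            ∀ i, j' < i → i < A.length → A.getD i 0 ≠ a := by
        have hjn : j ≤ A.length - 1 := by omega
        refine ⟨Nat.findGreatest (fun i => A.getD i 0 = a) (A.length - 1),
          Nat.findGreatest_spec (P := fun i => A.getD i 0 = a) (n := A.length - 1)
            (m := j) hjn hadef.symm,
          Nat.le_findGreatest (P := fun i => A.getD i 0 = a) (n := A.length - 1)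
            hjn hadef.symm, ?_, ?_⟩
        · have := Nat.findGreatest_le (P := fun i => A.getD i 0 = a) (A.length - 1)
          omega
        · intro i h1 h2
          exact Nat.findGreatest_is_greatest (P := fun i => A.getD i 0 = a)
            (n := A.length - 1) h1 (by omega)
      -- k' : first position carrying the value `b`
      obtain ⟨k', hk'spec, hk'k, hk'min⟩ :
          ∃ k', A.getD k' 0 = b ∧ k' ≤ k ∧ ∀ i, i < k' → A.getD i 0 ≠ b := by
        have hexk' : ∃ i, A.getD i 0 = b := ⟨k, hbdef.symm⟩
        exact ⟨Nat.find hexk', Nat.find_spec hexk', Nat.find_min' hexk' hbdef.symm,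
          fun i h => Nat.find_min hexk' h⟩
      have hk'l : k' < A.length := by omega
      have hj'k' : j' < k' := by
        by_contra hcon
        push_neg at hcon
        have := sorted_getD_mono hAsort hcon hj'l
        rw [hk'spec, hj'spec] at this
        omega
      set u := a + 2 with hudef
      set v := b - 2 with hvdef
      have hue : Even u := by obtain ⟨a1, ha1⟩ := hae; exact ⟨a1 + 1, by omega⟩
      have hve : Even v := by obtain ⟨b1, hb1⟩ := hbe; exact ⟨b1 - 1, by omega⟩
      set A' := (A.set j' u).set k' v with hA'def
      have hA'len : A'.length = A.length := by rw [hA'def]; simp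
      have hval : ∀ i, A'.getD i 0 = if i = k' then v else if i = j' then u else A.getD i 0 := by
        intro i
        by_cases hil : i < A.length
        · have hil' : i < A'.length := by omega
          rw [List.getD_eq_getElem A' 0 hil']
          have : A'[i]'hil' = ((A.set j' u).set k' v)[i]'(by rw [← hA'def]; exact hil') := by
            congr 1
          rw [this, List.getElem_set, List.getElem_set]
          by_cases h1 : i = k'
          · rw [if_pos h1.symm, if_pos h1]
          · rw [if_neg (fun hh => h1 hh.symm), if_neg h1]
            by_cases h2 : i = j'
            · rw [if_pos h2.symm, if_pos h2]
            · rw [if_neg (fun hh => h2 hh.symm), if_neg h2]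
              exact (List.getD_eq_getElem A 0 hil).symm
        · rw [List.getD_eq_default _ _ (show A'.length ≤ i by omega),
            List.getD_eq_default _ _ (show A.length ≤ i by omega),
            if_neg (show i ≠ k' by omega), if_neg (show i ≠ j' by omega)]
      have hAmono : ∀ p q, p ≤ q → q < A.length → A.getD p 0 ≤ A.getD q 0 :=
        fun p q h1 h2 => sorted_getD_mono hAsort h1 h2
      have hA'sorted : A'.Pairwise (· ≤ ·) := by
        apply List.pairwise_iff_getElem.mpr
        intro p q hp hq hpq
        have hpl : p < A.length := by omega
        have hql : q < A.length := by omega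
        have e1 : A'[p]'hp = A'.getD p 0 := (List.getD_eq_getElem A' 0 hp).symm
        have e2 : A'[q]'hq = A'.getD q 0 := (List.getD_eq_getElem A' 0 hq).symm
        rw [e1, e2, hval, hval]
        by_cases hqk : q = k'
        · rw [if_pos hqk]
          by_cases hpj : p = j'
          · rw [if_neg (show p ≠ k' by omega), if_pos hpj]; omega
          · rw [if_neg (show p ≠ k' by omega), if_neg hpj]
            have h5 : A.getD p 0 ≤ b := by rw [← hk'spec]; exact hAmono p k' (by omega) hk'l
            have h6 : A.getD p 0 ≠ b := hk'min p (by omega)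
            have h7 : Even (A.getD p 0) := evenA p (by omega)
            obtain ⟨x1, hx1⟩ := h7
            obtain ⟨b1, hb1⟩ := hbe
            omega
        · rw [if_neg hqk]
          by_cases hqj : q = j'
          · rw [if_pos hqj, if_neg (show p ≠ k' by omega), if_neg (show p ≠ j' by omega)]
            have : A.getD p 0 ≤ a := by rw [← hj'spec]; exact hAmono p j' (by omega) hj'l
            omega
          · rw [if_neg hqj]
            by_cases hpk : p = k'
            · rw [if_pos hpk]
              have : b ≤ A.getD q 0 := by rw [← hk'spec]; exact hAmono k' q (by omega) (by omega)
              omega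
            · rw [if_neg hpk]
              by_cases hpj : p = j'
              · rw [if_pos hpj]
                have h5 : a ≤ A.getD q 0 := by
                  rw [← hj'spec]; exact hAmono j' q (by omega) (by omega)
                have h6 : A.getD q 0 ≠ a := hj'big q (by omega) (by omega)
                have h7 : Even (A.getD q 0) := evenA q (by omega)
                obtain ⟨x1, hx1⟩ := h7
                obtain ⟨a1, ha1⟩ := hae
                omega
              · rw [if_neg hpj]
                exact hAmono p q (by omega) (by omega)
      have hdom' : ∀ m, m ≤ A.length → (A'.take m).sum ≤ (B.take m).sum := by
        intro m hm
        rw [sum_take_eq_range A' m (by omega), sum_take_eq_range B m (by omega)]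
        by_cases hmj : m ≤ j'
        · have hcg : ∀ i ∈ Finset.range m, A'.getD i 0 = A.getD i 0 := by
            intro i hi
            have hi' := Finset.mem_range.mp hi
            rw [hval, if_neg (show i ≠ k' by omega), if_neg (show i ≠ j' by omega)]
          rw [Finset.sum_congr rfl hcg, ← sum_take_eq_range A m (by omega),
            ← sum_take_eq_range B m (by omega)]
          exact hdom m (by omega)
        · push_neg at hmj
          by_cases hmk : m ≤ k'
          · have h1 : ∑ i ∈ Finset.range m, A'.getD i 0
                = ∑ i ∈ Finset.range m, (A.getD i 0 + if i = j' then 2 else 0) := by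
              refine Finset.sum_congr rfl fun i hi => ?_
              have hi' := Finset.mem_range.mp hi
              rw [hval, if_neg (show i ≠ k' by omega)]
              by_cases h2 : i = j'
              · rw [if_pos h2, if_pos h2, h2, hj'spec]
              · rw [if_neg h2, if_neg h2, add_zero]
            have h2 : ∑ i ∈ Finset.range m, (A.getD i 0 + if i = j' then 2 else 0)
                = (∑ i ∈ Finset.range m, A.getD i 0) + 2 := by
              rw [Finset.sum_add_distrib, Finset.sum_ite_eq' (Finset.range m) j' fun _ => 2,
                if_pos (Finset.mem_range.mpr (by omega))]
            have h3 : ∑ i ∈ Finset.range m, (A.getD i 0 + if i = j then 2 else 0)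
                = (∑ i ∈ Finset.range m, A.getD i 0) + 2 := by
              rw [Finset.sum_add_distrib, Finset.sum_ite_eq' (Finset.range m) j fun _ => 2,
                if_pos (Finset.mem_range.mpr (by omega))]
            have h4 : ∑ i ∈ Finset.range m, (A.getD i 0 + if i = j then 2 else 0)
                ≤ ∑ i ∈ Finset.range m, B.getD i 0 := by
              refine Finset.sum_le_sum fun i hi => ?_
              have hi' := Finset.mem_range.mp hi
              by_cases h5 : i = j
              · rw [if_pos h5, h5]
                obtain ⟨a1, ha1⟩ := hae
                obtain ⟨c1, hc1⟩ := hBje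
                omega
              · rw [if_neg h5, add_zero]
                exact hkmin i (by omega) (by omega)
            omega
          · push_neg at hmk
            have h1 : ∑ i ∈ Finset.range m, (A'.getD i 0 + if i = k' then 2 else 0)
                = ∑ i ∈ Finset.range m, (A.getD i 0 + if i = j' then 2 else 0) := by
              refine Finset.sum_congr rfl fun i hi => ?_
              by_cases h2 : i = k'
              · rw [if_pos h2, hval, if_pos h2, if_neg (show i ≠ j' by omega), h2, hk'spec]
                omega
              · rw [if_neg h2, add_zero, hval, if_neg h2]
                by_cases h3 : i = j'
                · rw [if_pos h3, if_pos h3, h3, hj'spec]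
                · rw [if_neg h3, if_neg h3, add_zero]
            have h2 : ∑ i ∈ Finset.range m, (A'.getD i 0 + if i = k' then 2 else 0)
                = (∑ i ∈ Finset.range m, A'.getD i 0) + 2 := by
              rw [Finset.sum_add_distrib, Finset.sum_ite_eq' (Finset.range m) k' fun _ => 2,
                if_pos (Finset.mem_range.mpr (by omega))]
            have h3 : ∑ i ∈ Finset.range m, (A.getD i 0 + if i = j' then 2 else 0)
                = (∑ i ∈ Finset.range m, A.getD i 0) + 2 := by
              rw [Finset.sum_add_distrib, Finset.sum_ite_eq' (Finset.range m) j' fun _ => 2,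
                if_pos (Finset.mem_range.mpr (by omega))]
            have h4 : ∑ i ∈ Finset.range m, A.getD i 0 ≤ ∑ i ∈ Finset.range m, B.getD i 0 := by
              rw [← sum_take_eq_range A m (by omega), ← sum_take_eq_range B m (by omega)]
              exact hdom m (by omega)
            omega
      -- multiset bookkeeping
      have haM : a ∈ M := by
        rw [← hAco, ← hj'spec, List.getD_eq_getElem A 0 hj'l]
        exact Multiset.mem_coe.mpr (List.getElem_mem hj'l)
      have hbM : b ∈ M := by
        rw [← hAco, ← hk'spec, List.getD_eq_getElem A 0 hk'l]
        exact Multiset.mem_coe.mpr (List.getElem_mem hk'l)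
      have hbMa : b ∈ M.erase a := by
        rw [Multiset.mem_erase_of_ne (show b ≠ a by omega)]
        exact hbM
      set R := (M.erase a).erase b with hRdef
      have hMeq : M = a ::ₘ b ::ₘ R := by
        rw [hRdef, Multiset.cons_erase hbMa, Multiset.cons_erase haM]
      have hgetj' : A[j']'hj'l = a := (List.getD_eq_getElem A 0 hj'l).symm.trans hj'spec
      have s1 : (↑(A.set j' u) : Multiset ℕ) = u ::ₘ M.erase a := by
        rw [coe_set_eq A j' u hj'l, hgetj', hAco]
      have hk'len2 : k' < (A.set j' u).length := by simp; omega
      have hgetk' : (A.set j' u)[k']'hk'len2 = b := by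
        rw [List.getElem_set, if_neg (show j' ≠ k' by omega)]
        exact (List.getD_eq_getElem A 0 hk'l).symm.trans hk'spec
      have s2 : (↑A' : Multiset ℕ) = u ::ₘ v ::ₘ R := by
        rw [hA'def, coe_set_eq _ k' v hk'len2, hgetk', s1,
          Multiset.erase_cons_tail _ (show u ≠ b by omega), Multiset.cons_swap]
      set M2 := u ::ₘ v ::ₘ R with hM2def
      have hsortM2 : M2.sort (· ≤ ·) = A' :=
        List.Perm.eq_of_pairwise'
          (Multiset.pairwise_sort _ _) hA'sorted
          (Multiset.coe_eq_coe.mp (by rw [Multiset.sort_eq]; exact s2.symm))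
      have hRsub : ∀ r ∈ R, r ∈ M := fun r hr =>
        Multiset.mem_of_mem_erase (Multiset.mem_of_mem_erase hr)
      have hM2even : ∀ r ∈ M2, Even r := by
        intro r hr
        rw [hM2def, Multiset.mem_cons, Multiset.mem_cons] at hr
        rcases hr with rfl | rfl | hr
        · exact hue
        · exact hve
        · exact hME r (hRsub r hr)
      have hM2pos : ∀ r ∈ M2, 0 < r := by
        intro r hr
        rw [hM2def, Multiset.mem_cons, Multiset.mem_cons] at hr
        rcases hr with rfl | rfl | hr
        · omega
        · omega
        · exact hMP r (hRsub r hr)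
      have hM2sum : M2.sum = M.sum := by
        rw [hM2def, hMeq]
        simp only [Multiset.sum_cons]
        omega
      have hM2card : Multiset.card M2 = Multiset.card M := by
        rw [hM2def, hMeq]; simp
      clear_value a b u v A' R M2
      have hsqlt : (Multiset.map (fun r => r * r) M2).sum
          < (Multiset.map (fun r => r * r) M).sum := by
        rw [hM2def, hMeq]
        simp only [Multiset.map_cons, Multiset.sum_cons]
        have key : u * u + v * v < a * a + b * b := by
          rw [hudef, hvdef]
          exact sq_transfer_lt hab4
        omega
      have hmeas2 : msMeasure M2 < msMeasure M := by
        unfold msMeasure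
        rw [hM2sum, hM2card]
        omega
      have recursion := IH (msMeasure M2) (by omega) M2 N le_rfl hM2even hNE hM2pos hNP
        (by rw [hM2sum, hsum])
        (by
          show SupDomL (M2.sort (· ≤ ·)) B
          rw [hsortM2]
          intro m hm
          exact hdom' m (by rw [hA'len] at hm; omega))
      have hstep : IsSumSq (Pm n M - Pm n M2) := by
        rw [hMeq, hM2def]
        exact step_sos n a b u v R (fun r hr => hME r (hRsub r hr))
          (transfer_sos n (by omega) (by omega) (by omega) (by omega) hae hue hve)
      have hfinal : Pm n M - Pm n N = (Pm n M - Pm n M2) + (Pm n M2 - Pm n N) := by ring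
      rw [hfinal]
      exact hstep.add recursion

  · -- more parts in `M` : merge case
    have hBpos : 1 ≤ B.length := by
      by_contra hc
      have hBnil : B = [] := List.length_eq_zero_iff.mp (by omega)
      have hN0 : N = 0 := by rw [← hBco, hBnil]; rfl
      have hNsum : N.sum = 0 := by rw [hN0]; rfl
      have hMne : M ≠ 0 := by
        intro h
        rw [h, Multiset.card_zero] at hAlen
        omega
      obtain ⟨r, hr⟩ := Multiset.exists_mem_of_ne_zero hMne
      have h1 : r ≤ M.sum := Multiset.single_le_sum (fun x _ => Nat.zero_le x) r hr
      have h2 := hMP r hr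
      omega
    have hA2 : 2 ≤ A.length := by omega
    set D := A.drop (A.length - 2) with hD
    have hDlen : D.length = 2 := by rw [hD]; simp; omega
    obtain ⟨u, v, huv⟩ := List.length_eq_two.mp hDlen
    have hAsplit : A = A.take (A.length - 2) ++ [u, v] := by
      conv_lhs => rw [← List.take_append_drop (A.length - 2) A]
      rw [← hD, huv]
    set C := A.take (A.length - 2) with hC
    have hClen : C.length = A.length - 2 := by rw [hC]; simp
    have huA : u ∈ A := by rw [hAsplit]; simp
    have hvA : v ∈ A := by rw [hAsplit]; simp
    have hue : Even u := hME u ((hmemA u).mp huA)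
    have hve : Even v := hME v ((hmemA v).mp hvA)
    have hup : 0 < u := hMP u ((hmemA u).mp huA)
    have hvp : 0 < v := hMP v ((hmemA v).mp hvA)
    have hCsorted : C.Pairwise (· ≤ ·) := hAsort.sublist (List.take_sublist _ _)
    have hcross : ∀ c ∈ C, c ≤ u := by
      intro c hc
      have h := (List.pairwise_append.mp (hAsplit ▸ hAsort)).2.2
      exact h c hc u (by simp)
    set A'' := C ++ [u + v] with hA''
    have hA''len : A''.length = A.length - 1 := by
      rw [hA'']; simp only [List.length_append, hClen, List.length_cons,
        List.length_nil]; omega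
    have hA''sorted : A''.Pairwise (· ≤ ·) := by
      rw [hA'']
      refine List.pairwise_append.mpr ⟨hCsorted, by simp, ?_⟩
      intro c hc w hw
      have hw' : w = u + v := by simpa using hw
      subst hw'
      exact le_trans (hcross c hc) (Nat.le_add_right _ _)
    set M' := (u + v) ::ₘ (↑C : Multiset ℕ) with hM'
    have hMsplit : M = u ::ₘ v ::ₘ (↑C : Multiset ℕ) := by
      rw [← hAco]
      have hperm : List.Perm A (u :: v :: C) := by
        rw [hAsplit]; exact List.perm_append_comm
      exact Multiset.coe_eq_coe.mpr hperm
    have hM'coe : (↑A'' : Multiset ℕ) = M' := by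
      rw [hA'', hM', Multiset.cons_coe]
      exact Multiset.coe_eq_coe.mpr (List.perm_append_singleton _ _)
    have hsortM' : M'.sort (· ≤ ·) = A'' :=
      List.Perm.eq_of_pairwise'
        (Multiset.pairwise_sort _ _) hA''sorted
        (Multiset.coe_eq_coe.mp (by rw [Multiset.sort_eq]; exact hM'coe.symm))
    have hMsum' : M'.sum = M.sum := by
      rw [hMsplit, hM']
      simp only [Multiset.sum_cons]
      omega
    have hcard' : Multiset.card M' + 1 = Multiset.card M := by
      rw [hMsplit, hM']; simp
    have hmeas : msMeasure M' < msMeasure M := by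
      have h3 := sqsum_le M'
      rw [hMsum'] at h3
      unfold msMeasure
      rw [hMsum']
      set T := M.sum * M.sum with hT
      have hexp : (Multiset.card M' + 1) * (T + 1) = Multiset.card M' * (T + 1) + T + 1 := by
        ring
      calc Multiset.card M' * (T + 1) + (Multiset.map (fun r => r * r) M').sum
          ≤ Multiset.card M' * (T + 1) + T := by omega
        _ < (Multiset.card M' + 1) * (T + 1) := by omega
        _ = Multiset.card M * (T + 1) := by rw [hcard']
        _ ≤ Multiset.card M * (T + 1) + (Multiset.map (fun r => r * r) M).sum :=
            Nat.le_add_right _ _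
    have hCsub : ∀ r, r ∈ C → r ∈ M := by
      intro r hr
      exact (hmemA r).mp (by rw [hAsplit]; exact List.mem_append_left _ hr)
    have hM'even : ∀ r ∈ M', Even r := by
      intro r hr
      rw [hM', Multiset.mem_cons] at hr
      rcases hr with rfl | hr
      · exact hue.add hve
      · exact hME r (hCsub r (by exact Multiset.mem_coe.mp hr))
    have hM'pos : ∀ r ∈ M', 0 < r := by
      intro r hr
      rw [hM', Multiset.mem_cons] at hr
      rcases hr with rfl | hr
      · omega
      · exact hMP r (hCsub r (by exact Multiset.mem_coe.mp hr))
    have hdom'' : SupDomL (M'.sort (· ≤ ·)) B := by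
      rw [hsortM']
      intro m hm
      rw [hA''len] at hm
      by_cases hm2 : m ≤ A.length - 2
      · have e1 : A''.take m = C.take m := by
          rw [hA'']; exact List.take_append_of_le_length (by omega)
        have e2 : A.take m = C.take m := by
          conv_lhs => rw [hAsplit]
          exact List.take_append_of_le_length (by omega)
        rw [e1, ← e2]
        exact hdom m (by omega)
      · have hm' : m = A.length - 1 := by omega
        have hmB : m = B.length := by omega
        have e1 : (A''.take m).sum = A''.sum := by
          rw [show m = A''.length by omega, List.take_length]
        have e2 : (B.take m).sum = B.sum := by
          rw [show m = B.length by omega, List.take_length]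
        rw [e1, e2]
        have e3 : A''.sum = A.sum := by
          rw [hA'']
          conv_rhs => rw [hAsplit]
          simp only [List.sum_append, List.sum_cons, List.sum_nil]
          omega
        rw [e3, hAsum, hsum, ← hBsum]
    have recursion := IH (msMeasure M') (by omega) M' N le_rfl hM'even hNE hM'pos hNP
      (by rw [hMsum', hsum]) (by exact hdom'')
    have hstep : IsSumSq (Pm n M - Pm n M') := by
      rw [hMsplit, hM']
      exact merge_step_sos n u v _ hue hve
        (fun r hr => hME r (hCsub r (Multiset.mem_coe.mp hr)))
    have hfinal : Pm n M - Pm n N = (Pm n M - Pm n M') + (Pm n M' - Pm n N) := by ring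
    rw [hfinal]
    exact hstep.add recursion


/-! ### The main theorem -/

/-- If `λ, μ` are even partitions of `2d` and `λ ⪰ μ`, then
`p_λ − p_μ` is a sum of squares in any number of variables. -/
theorem superDominates_sos {d : ℕ} (hd : 0 < d) (lam mu : Nat.Partition (2 * d))
    (hlam : ∀ r ∈ lam.parts, Even r) (hmu : ∀ r ∈ mu.parts, Even r)
    (h : SuperDominates lam mu) :
    ∀ n : ℕ, 0 < n → IsSOS (ppoly n lam - ppoly n mu) := by
  intro n hn
  have hdom : SupDomL (lam.parts.sort (· ≤ ·)) (mu.parts.sort (· ≤ ·)) := by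
    intro j hj
    rcases Nat.eq_zero_or_pos j with rfl | hj0
    · simp
    · refine h j hj0 ?_
      have h1 : (lam.parts.sort (· ≤ ·)).length = len lam := Multiset.length_sort _
      have h2 : (mu.parts.sort (· ≤ ·)).length = len mu := Multiset.length_sort _
      omega
  have hsum : lam.parts.sum = mu.parts.sum := by rw [lam.parts_sum, mu.parts_sum]
  apply isSOS_of_isSumSq
  exact main_sos n (msMeasure lam.parts) lam.parts mu.parts le_rfl hlam hmu
    (fun r hr => lam.parts_pos hr) (fun r hr => mu.parts_pos hr) hsum hdom
end
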